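/- arXiv:2508.01190 — 8 statements merged into one kernel-verified Lean document; each statement's English description precedes it below -/
import Mathlib

section
/- Let n = 2m with m a positive integer. Every element x of F_{2^n} that does not lie in the subfield F_{2^m} can be written uniquely as x = v1(v2+1)/(v1+v2), where v1 and v2 are elements of μ_{2^m+1} \ {1} with v1 ≠ v2. That is, the map (v1,v2) ↦ v1(v2+1)/(v1+v2) is a bijection from {(v1,v2) : v1,v2 ∈ μ_{2^m+1}\{1}, v1 ≠ v2} onto F_{2^n} \ F_{2^m}. -/
/-!
Write `σ x = x ^ 2 ^ m`, an involutive field automorphism of `F_{2^{2m}}` with fixed field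
`F_{2^m}`; the unit circle is `{v | σ v * v = 1}`, on which `σ v = v⁻¹`. For `x = v₁(v₂+1)/(v₁+v₂)`
this gives `σ x = (v₂+1)/(v₁+v₂)`, so `x = v₁ σ x`, and in characteristic two `x + 1` is the same
expression with `v₁, v₂` swapped. Hence `x ↦ (x / σ x, (x + 1) / σ (x + 1))` inverts the map,
and it sends every `x` with `σ x ≠ x` back into the set of admissible pairs.
-/

section Involution

variable {K : Type*} [Field K] {σ : K →+* K}

lemma ne_zero_of_map_ne_self {a : K} (h : σ a ≠ a) : a ≠ 0 := by
  rintro rfl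
  exact h (map_zero σ)

lemma map_ne_zero_of_map_ne_self {a : K} (h : σ a ≠ a) : σ a ≠ 0 :=
  (map_ne_zero σ).mpr (ne_zero_of_map_ne_self h)

lemma mem_circle_div_map (hσ : Function.Involutive σ) {a : K} (h : σ a ≠ a) :
    σ (a / σ a) * (a / σ a) = 1 := by
  have ha := ne_zero_of_map_ne_self h
  have ha' := map_ne_zero_of_map_ne_self h
  rw [map_div₀, hσ a]
  field_simp

lemma div_map_ne_one {a : K} (h : σ a ≠ a) : a / σ a ≠ 1 := by
  rw [ne_eq, div_eq_one_iff_eq (map_ne_zero_of_map_ne_self h)]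
  exact h.symm

lemma map_add_one_ne_self {a : K} (h : σ a ≠ a) : σ (a + 1) ≠ a + 1 := by
  rwa [map_add, map_one, ne_eq, add_left_inj]

lemma div_map_ne_div_map_add_one {a : K} (h : σ a ≠ a) : a / σ a ≠ (a + 1) / σ (a + 1) := by
  have ha : σ a ≠ 0 := map_ne_zero_of_map_ne_self h
  have ha' : σ (a + 1) ≠ 0 := map_ne_zero_of_map_ne_self (map_add_one_ne_self h)
  rw [ne_eq, div_eq_div_iff ha ha', map_add, map_one]
  intro h'
  exact h (by linear_combination -h')

lemma iterateFrobenius_involutive [Finite K] (p m : ℕ) [Fact p.Prime] [CharP K p]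
    (hK : Nat.card K = p ^ (2 * m)) : Function.Involutive (iterateFrobenius K p m) := by
  intro x
  have := Fintype.ofFinite K
  rw [iterateFrobenius_def, iterateFrobenius_def, ← pow_mul, ← pow_add, ← two_mul, ← hK,
    Nat.card_eq_fintype_card, FiniteField.pow_card]

end Involution

section CircleParam

variable {K : Type*} [Field K] [CharP K 2] {σ : K →+* K}

def circleParam (p : K × K) : K := p.1 * (p.2 + 1) / (p.1 + p.2)

variable (σ) in
def circleParamInv (x : K) : K × K := (x / σ x, (x + 1) / σ (x + 1))

lemma circleParam_add_one {v₁ v₂ : K} (h : v₁ ≠ v₂) :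
    circleParam (v₁, v₂) + 1 = circleParam (v₂, v₁) := by
  rw [circleParam, circleParam, div_add_one (mt CharTwo.add_eq_zero.mp h), add_comm v₂ v₁]
  congr 1
  linear_combination v₁ * CharTwo.two_eq_zero (R := K)

lemma map_circleParam {v₁ v₂ : K} (h₁ : σ v₁ * v₁ = 1) (h₂ : σ v₂ * v₂ = 1) (h : v₁ ≠ v₂) :
    σ (circleParam (v₁, v₂)) = (v₂ + 1) / (v₁ + v₂) := by
  have hv₁ := right_ne_zero_of_mul_eq_one h₁
  have hv₂ := right_ne_zero_of_mul_eq_one h₂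
  have hs : v₁ + v₂ ≠ 0 := mt CharTwo.add_eq_zero.mp h
  rw [circleParam, map_div₀, map_mul, map_add, map_add, map_one,
    eq_inv_of_mul_eq_one_left h₁, eq_inv_of_mul_eq_one_left h₂, inv_add_inv hv₁ hv₂]
  field_simp
  ring

lemma circleParam_div_map {v₁ v₂ : K} (h₁ : σ v₁ * v₁ = 1) (h₂ : σ v₂ * v₂ = 1)
    (h₂' : v₂ ≠ 1) (h : v₁ ≠ v₂) :
    circleParam (v₁, v₂) / σ (circleParam (v₁, v₂)) = v₁ := by
  have hσx : (v₂ + 1) / (v₁ + v₂) ≠ 0 :=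
    div_ne_zero (mt CharTwo.add_eq_zero.mp h₂') (mt CharTwo.add_eq_zero.mp h)
  rw [map_circleParam h₁ h₂ h, circleParam, mul_div_assoc, mul_div_cancel_right₀ _ hσx]

lemma map_circleParam_ne_self {v₁ v₂ : K} (h₁ : σ v₁ * v₁ = 1) (h₂ : σ v₂ * v₂ = 1)
    (h₁' : v₁ ≠ 1) (h₂' : v₂ ≠ 1) (h : v₁ ≠ v₂) :
    σ (circleParam (v₁, v₂)) ≠ circleParam (v₁, v₂) := by
  intro hfix
  have hx : circleParam (v₁, v₂) ≠ 0 :=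
    div_ne_zero (mul_ne_zero (right_ne_zero_of_mul_eq_one h₁) (mt CharTwo.add_eq_zero.mp h₂'))
      (mt CharTwo.add_eq_zero.mp h)
  have hv₁ := circleParam_div_map h₁ h₂ h₂' h
  rw [hfix, div_self hx] at hv₁
  exact h₁' hv₁.symm

lemma circleParam_div_div {a b : K} (hb : b ≠ 0) (hb' : b + 1 ≠ 0) (h : a ≠ b) :
    circleParam (a / b, (a + 1) / (b + 1)) = a := by
  have hs : a + b ≠ 0 := mt CharTwo.add_eq_zero.mp h
  have h2 := CharTwo.two_eq_zero (R := K)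
  have e₁ : (a + 1) / (b + 1) + 1 = (a + b) / (b + 1) := by
    rw [div_add_one hb']; congr 1; linear_combination h2
  have e₂ : a / b + (a + 1) / (b + 1) = (a + b) / (b * (b + 1)) := by
    rw [div_add_div _ _ hb hb']; congr 1; linear_combination a * b * h2
  rw [circleParam, e₁, e₂]
  field_simp

theorem bijOn_circleParam (hσ : Function.Involutive σ) :
    Set.BijOn circleParam
      {p : K × K | σ p.1 * p.1 = 1 ∧ σ p.2 * p.2 = 1 ∧ p.1 ≠ 1 ∧ p.2 ≠ 1 ∧ p.1 ≠ p.2}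
      {x | σ x ≠ x} := by
  refine Set.InvOn.bijOn (f' := circleParamInv σ) ⟨?_, ?_⟩ ?_ ?_
  · rintro ⟨v₁, v₂⟩ ⟨h₁, h₂, h₁', h₂', h⟩
    refine Prod.ext (circleParam_div_map h₁ h₂ h₂' h) ?_
    change (circleParam (v₁, v₂) + 1) / σ (circleParam (v₁, v₂) + 1) = v₂
    rw [circleParam_add_one h]
    exact circleParam_div_map h₂ h₁ h₁' h.symm
  · intro x hx
    have hx₀ : σ x ≠ 0 := map_ne_zero_of_map_ne_self hx
    have hx₁ : σ (x + 1) ≠ 0 := map_ne_zero_of_map_ne_self (map_add_one_ne_self hx)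
    rw [map_add, map_one] at hx₁
    rw [circleParamInv, map_add, map_one]
    exact circleParam_div_div hx₀ hx₁ (Ne.symm hx)
  · rintro ⟨v₁, v₂⟩ ⟨h₁, h₂, h₁', h₂', h⟩
    exact map_circleParam_ne_self h₁ h₂ h₁' h₂' h
  · intro x hx
    have hx₁ := map_add_one_ne_self hx
    exact ⟨mem_circle_div_map hσ hx, mem_circle_div_map hσ hx₁, div_map_ne_one hx,
      div_map_ne_one hx₁, div_map_ne_div_map_add_one hx⟩

end CircleParam

/-- Lemma (unit-circle parametrization): for `n = 2m`, the map
`(v₁, v₂) ↦ v₁(v₂+1)/(v₁+v₂)` is a bijection from the set of pairs of distinct elements of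
`μ_{2^m+1} \ {1}` onto `F_{2^n} \ F_{2^m}`, where the subfield `F_{2^m}` of `F_{2^n}` is
`{x : x^{2^m} = x}`. -/
theorem stmt0 (m : ℕ) (hm : 0 < m) :
    Set.BijOn
      (fun p : GaloisField 2 (2 * m) × GaloisField 2 (2 * m) =>
        p.1 * (p.2 + 1) / (p.1 + p.2))
      {p : GaloisField 2 (2 * m) × GaloisField 2 (2 * m) |
        p.1 ^ (2 ^ m + 1) = 1 ∧ p.2 ^ (2 ^ m + 1) = 1 ∧ p.1 ≠ 1 ∧ p.2 ≠ 1 ∧ p.1 ≠ p.2}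
      {x : GaloisField 2 (2 * m) | x ^ (2 ^ m) ≠ x} := by
  have hσ := iterateFrobenius_involutive 2 m (GaloisField.card 2 (2 * m) (by omega))
  have h := bijOn_circleParam hσ
  simp only [iterateFrobenius_def, ← pow_succ] at h
  exact h
end

section
/- Let n and k be positive integers with gcd(k,n) = 1, and let F(x) = x^{2^{2k}+2^k+1} be the corresponding power function on F_{2^n}. If n is odd then DLU_F ≤ 2^{(n+1)/2}, and if n is even then DLU_F ≤ 2^{n/2+1}. -/
/-!
Write `σ` for the Frobenius power `x ↦ x ^ 2 ^ k`, so that `F x = σ (σ x) * σ x * x`. For fixed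
`u, v`, the component `f x = Tr (v (F (x + u) + F x))` of the derivative of `F` is a quadratic
Boolean function, and `2 DLCT_F(u, v)` is its sign sum `S`. The second differences of `f` form
the bilinear form `Tr (σ² x · L w)`, where `L` is a `σ`-linearized polynomial of `σ`-degree `4`
with nonzero leading coefficient, so `S² = 2ⁿ E` with `|E|` at most the number of roots of `L`.
As `gcd k n = 1`, the fixed field of `σ` is `F₂`, and a `σ`-linearized polynomial of `σ`-degree
`d` then has at most `2 ^ d` roots. Hence `E ≤ 16`, which gives the bound for even `n`; for odd
`n`, `2 E` must moreover be a square, so `E ≤ 8`.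
-/

open scoped BigOperators Classical

noncomputable instance (p n : ℕ) [Fact p.Prime] : Fintype (GaloisField p n) :=
  Fintype.ofFinite _

/-- The absolute trace map from `F_{2^n}` to `F_2`. -/
noncomputable def trF2 (n : ℕ) (x : GaloisField 2 n) : ZMod 2 :=
  Algebra.trace (ZMod 2) (GaloisField 2 n) x

/-- The binary Kloosterman sum `K_m(γ) = Σ_x (-1)^{Tr(γx + x⁻¹)}` (with `0⁻¹ = 0`). -/
noncomputable def kloo (m : ℕ) (γ : GaloisField 2 m) : ℤ :=
  ∑ x : GaloisField 2 m, (-1 : ℤ) ^ (trF2 m (γ * x + x⁻¹)).val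

/-- The DLCT entry of `F : F_{2^n} → F_{2^n}` at `(u,v)`. -/
noncomputable def dlct (n : ℕ) (F : GaloisField 2 n → GaloisField 2 n)
    (u v : GaloisField 2 n) : ℤ :=
  (Nat.card {x : GaloisField 2 n // trF2 n (v * (F (x + u) + F x)) = 0} : ℤ) - 2 ^ (n - 1)

/-- The differential-linear uniformity of `F`: the max of `|DLCT_F(u,v)|` over nonzero `u, v`. -/
noncomputable def dlu (n : ℕ) (F : GaloisField 2 n → GaloisField 2 n) : ℕ :=
  Finset.sup
    (Finset.univ.filter fun p : GaloisField 2 n × GaloisField 2 n => p.1 ≠ 0 ∧ p.2 ≠ 0)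
    (fun p => (dlct n F p.1 p.2).natAbs)

open Finset

lemma neg_one_pow_val_add (a b : ZMod 2) :
    (-1 : ℤ) ^ (a + b).val = (-1) ^ a.val * (-1) ^ b.val := by
  revert a b; decide

section CharacterSums

variable {G : Type*} [Fintype G]

lemma sum_neg_one_pow_val_eq_card_filter (f : G → ZMod 2) :
    ∑ x, (-1 : ℤ) ^ (f x).val = 2 * #{x | f x = 0} - Fintype.card G := by
  have hsign : ∀ t : ZMod 2, (-1 : ℤ) ^ t.val = if t = 0 then 1 else -1 := by decide
  have hsplit := card_filter_add_card_filter_not (s := univ) (fun x : G => f x = 0)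
  simp only [hsign, sum_ite, sum_const, card_univ] at hsplit ⊢
  push_cast [← hsplit]
  ring

variable [AddCommGroup G]

lemma sum_neg_one_pow_val_addMonoidHom (φ : G →+ ZMod 2) :
    ∑ x, (-1 : ℤ) ^ (φ x).val = if φ = 0 then (Fintype.card G : ℤ) else 0 := by
  split_ifs with hφ
  · simp [hφ]
  obtain ⟨x₀, hx₀⟩ : ∃ x₀, φ x₀ = 1 := by
    by_contra! h
    have hZ2 : ∀ t : ZMod 2, t ≠ 1 → t = 0 := by decide
    exact hφ (AddMonoidHom.ext fun x => hZ2 _ (h x))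
  have hshift : ∑ x, (-1 : ℤ) ^ (φ x).val = -∑ x, (-1 : ℤ) ^ (φ x).val :=
    calc ∑ x, (-1 : ℤ) ^ (φ x).val = ∑ x, (-1 : ℤ) ^ (φ (x + x₀)).val :=
          (Equiv.sum_comp (Equiv.addRight x₀) (fun x => (-1 : ℤ) ^ (φ x).val)).symm
      _ = -∑ x, (-1 : ℤ) ^ (φ x).val := by
          simp [map_add, hx₀, neg_one_pow_val_add, ZMod.val_one]
  linarith

lemma sq_sum_neg_one_pow_val (f : G → ZMod 2) (φ : G → G →+ ZMod 2)
    (hφ : ∀ x w, f (x + w) + f x + (f w + f 0) = φ w x) :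
    (∑ x, (-1 : ℤ) ^ (f x).val) ^ 2
      = Fintype.card G * ∑ w with φ w = 0, (-1 : ℤ) ^ (f w + f 0).val := by
  have hsq : ∀ x w, (-1 : ℤ) ^ (f x).val * (-1) ^ (f (x + w)).val
      = (-1) ^ (φ w x).val * (-1) ^ (f w + f 0).val := by
    intro x w
    rw [← hφ, ← neg_one_pow_val_add, ← neg_one_pow_val_add]
    congr 2
    rw [add_assoc _ (f w + f 0), CharTwo.add_self_eq_zero, add_zero, add_comm]
  calc (∑ x, (-1 : ℤ) ^ (f x).val) ^ 2
      = ∑ x, ∑ w, (-1 : ℤ) ^ (f x).val * (-1) ^ (f (x + w)).val := by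
        rw [sq, sum_mul_sum]
        exact sum_congr rfl fun x _ => (Equiv.sum_comp (Equiv.addLeft x) _).symm
    _ = ∑ w, (∑ x, (-1 : ℤ) ^ (φ w x).val) * (-1) ^ (f w + f 0).val := by
        simp_rw [hsq, sum_mul]
        exact sum_comm
    _ = _ := by
        simp_rw [sum_neg_one_pow_val_addMonoidHom, ite_mul, zero_mul, sum_ite, sum_const_zero,
          add_zero, ← mul_sum]

end CharacterSums

section Linearized

def linearizedEval {R : Type*} [Semiring R] (σ : R →+* R) (a : ℕ → R) (d : ℕ)
    (x : R) : R :=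
  ∑ i ∈ range (d + 1), a i * (σ ^ i) x

lemma linearizedEval_eq_of_sum_eq_zero {R : Type*} [CommRing R] (σ : R →+* R) (a : ℕ → R)
    (d : ℕ) (ha : ∑ i ∈ range (d + 2), a i = 0) (y : R) :
    linearizedEval σ a (d + 1) y
      = linearizedEval σ (fun j => -∑ i ∈ range (j + 1), a i) d (σ y - y) := by
  have hdiff : ∀ i, (σ ^ (i + 1)) y - (σ ^ i) y = (σ ^ i) (σ y - y) := by
    intro i
    rw [map_sub, RingHom.coe_pow, RingHom.coe_pow, Function.iterate_succ_apply]
  have hparts := sum_range_by_parts (fun i => (σ ^ i) y) a (d + 2)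
  simp only [smul_eq_mul, ha, mul_zero, zero_sub] at hparts
  simp only [linearizedEval, mul_comm (a _), hparts, ← hdiff, neg_mul, sum_neg_distrib]
  exact congrArg _ (sum_congr rfl fun i _ => mul_comm _ _)

variable {K : Type*} [Field K]

lemma card_filter_sub_div_eq_le_two (σ : K →+* K) (hσ : ∀ x, σ x = x → x = 0 ∨ x = 1)
    {v : K} (hv : v ≠ 0) (s : Finset K) (z : K) :
    #{x ∈ s | σ (x / v) - x / v = z} ≤ 2 := by
  obtain h | ⟨x₀, hx₀⟩ := eq_empty_or_nonempty {x ∈ s | σ (x / v) - x / v = z}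
  · rw [h]; simp
  refine (card_le_card (t := {x₀, x₀ + v}) fun x hx => ?_).trans card_le_two
  have hfix : σ ((x - x₀) / v) = (x - x₀) / v := by
    rw [sub_div, map_sub]
    linear_combination (mem_filter.mp hx).2 - (mem_filter.mp hx₀).2
  rcases hσ _ hfix with h | h <;> field_simp at h
  · simp [show x = x₀ by linear_combination h]
  · simp [show x = x₀ + v by linear_combination h]

/-- After rescaling by a root `v ≠ 0`, the polynomial vanishes at `1`; it then factors through
the at most two-to-one map `x ↦ σ (x / v) - x / v`, and the `σ`-degree drops by one. -/
theorem card_filter_linearizedEval_eq_zero_le [Fintype K] (σ : K →+* K)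
    (hσ : ∀ x, σ x = x → x = 0 ∨ x = 1) (d : ℕ) (a : ℕ → K) (ha : a d ≠ 0) :
    #{x | linearizedEval σ a d x = 0} ≤ 2 ^ d := by
  induction d generalizing a with
  | zero =>
    refine (card_le_card fun x hx => ?_).trans (card_singleton (0 : K)).le
    simpa [linearizedEval, ha] using hx
  | succ d ih =>
    by_cases hroot : ∃ v ≠ 0, linearizedEval σ a (d + 1) v = 0
    swap
    · push Not at hroot
      refine (card_le_card fun x hx => ?_).trans
        ((card_singleton (0 : K)).le.trans Nat.one_le_two_pow)
      by_contra h0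
      exact hroot x (by simpa using h0) (mem_filter.mp hx).2
    obtain ⟨v, hv, hPv⟩ := hroot
    set a' : ℕ → K := fun i => a i * (σ ^ i) v
    set b : ℕ → K := fun j => -∑ i ∈ range (j + 1), a' i
    have hsum : ∑ i ∈ range (d + 2), a' i = 0 := hPv
    have hb : b d ≠ 0 := by
      have : b d = a' (d + 1) := by
        simp only [b]
        rw [sum_range_succ] at hsum
        linear_combination -hsum
      rw [this]
      exact mul_ne_zero ha ((map_ne_zero _).mpr hv)
    have hfactor : ∀ x,
        linearizedEval σ a (d + 1) x = linearizedEval σ b d (σ (x / v) - x / v) := by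
      intro x
      rw [← linearizedEval_eq_of_sum_eq_zero σ a' d hsum]
      simp only [linearizedEval, a', mul_assoc, ← map_mul]
      rw [mul_div_cancel₀ _ hv]
    calc #{x | linearizedEval σ a (d + 1) x = 0}
        ≤ 2 * #{z | linearizedEval σ b d z = 0} := by
          refine card_le_mul_card_image_of_maps_to (fun x hx => ?_) 2
            (fun z _ => card_filter_sub_div_eq_le_two σ hσ hv _ z)
          simpa [hfactor] using hx
      _ ≤ 2 ^ (d + 1) := by
          rw [pow_succ']
          exact Nat.mul_le_mul_left 2 (ih b hb)

end Linearized

lemma eq_zero_or_eq_one_of_pow_two_pow_eq_self {K : Type*} [Field K] [Fintype K] [CharP K 2]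
    {n k : ℕ} (hcard : Fintype.card K = 2 ^ n) (hkn : Nat.gcd k n = 1) {x : K}
    (hx : x ^ 2 ^ k = x) : x = 0 ∨ x = 1 := by
  have hper : ∀ m, x ^ 2 ^ m = x → Function.IsPeriodicPt (frobenius K 2) m x := fun m h =>
    (iterate_frobenius (p := 2) (n := m) (x := x)).trans h
  have h1 := (hper k hx).gcd (hper n (hcard ▸ FiniteField.pow_card x))
  rw [hkn, Function.IsPeriodicPt, Function.IsFixedPt, Function.iterate_one, frobenius_def] at h1
  have : x * (x - 1) = 0 := by linear_combination h1
  rcases mul_eq_zero.mp this with h | h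
  · exact .inl h
  · exact .inr (sub_eq_zero.mp h)

section Cubic

variable {R : Type*} [CommRing R] (σ : R →+* R)

lemma third_difference_mul_mul [CharP R 2] {F : R → R} (hF : ∀ y, F y = σ (σ y) * σ y * y)
    (x w u : R) :
    F (x + w + u) + F (x + w) + (F (x + u) + F x) + (F (w + u) + F w + (F u + F 0))
      = σ (σ x) * (σ w * u + σ u * w) + σ x * (σ (σ w) * u + σ (σ u) * w)
        + x * (σ (σ w) * σ u + σ (σ u) * σ w) := by
  have hsigned : F (x + w + u) - F (x + w) - (F (x + u) - F x) - (F (w + u) - F w - (F u - F 0))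
      = σ (σ x) * (σ w * u + σ u * w) + σ x * (σ (σ w) * u + σ (σ u) * w)
        + x * (σ (σ w) * σ u + σ (σ u) * σ w) := by
    simp only [hF, map_add, map_zero]
    ring
  simpa only [CharTwo.sub_eq_add] using hsigned

def radicalCoeff (u v : R) : ℕ → R
  | 0 => v * σ u
  | 1 => v * u + σ v * (σ ^ 3) u
  | 3 => σ v * σ u + (σ ^ 2) v * (σ ^ 4) u
  | 4 => (σ ^ 2) v * (σ ^ 3) u
  | _ => 0

lemma radical_eq_linearizedEval (u v w : R) :
    v * (σ w * u + σ u * w) + σ (v * (σ (σ w) * u + σ (σ u) * w))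
      + (σ ^ 2) (v * (σ (σ w) * σ u + σ (σ u) * σ w))
      = linearizedEval σ (radicalCoeff σ u v) 4 w := by
  simp only [linearizedEval, radicalCoeff, sum_range_succ, range_one, sum_singleton,
    RingHom.coe_pow, Function.iterate_succ, Function.iterate_zero, Function.comp_apply, id_eq,
    map_add, map_mul, zero_mul, add_zero]
  ring

end Cubic

section GaloisField

variable {n : ℕ}

lemma GaloisField.fintype_card_two (hn : n ≠ 0) : Fintype.card (GaloisField 2 n) = 2 ^ n := by
  rw [← Nat.card_eq_fintype_card, GaloisField.card 2 n hn]

lemma trF2_add (x y : GaloisField 2 n) : trF2 n (x + y) = trF2 n x + trF2 n y :=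
  map_add _ x y

lemma trF2_pow_two_pow (m : ℕ) (x : GaloisField 2 n) : trF2 n (x ^ 2 ^ m) = trF2 n x := by
  have h := Algebra.trace_eq_of_algEquiv
    (FiniteField.frobeniusAlgEquivOfAlgebraic (ZMod 2) (GaloisField 2 n) ^ m) x
  rwa [AlgEquiv.coe_pow, FiniteField.coe_frobeniusAlgEquivOfAlgebraic_iterate, ZMod.card] at h

lemma eq_zero_of_forall_trF2_mul_eq_zero {τ : GaloisField 2 n → GaloisField 2 n}
    (hτ : Function.Surjective τ) {c : GaloisField 2 n} (h : ∀ x, trF2 n (τ x * c) = 0) :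
    c = 0 := by
  refine (traceForm_nondegenerate (ZMod 2) (GaloisField 2 n)).1 c fun y => ?_
  obtain ⟨x, rfl⟩ := hτ y
  rw [Algebra.traceForm_apply, mul_comm]
  exact h x

noncomputable def derivComponent (F : GaloisField 2 n → GaloisField 2 n)
    (u v x : GaloisField 2 n) : ZMod 2 :=
  trF2 n (v * (F (x + u) + F x))

lemma two_mul_dlct (hn : n ≠ 0) (F : GaloisField 2 n → GaloisField 2 n)
    (u v : GaloisField 2 n) :
    2 * dlct n F u v = ∑ x, (-1 : ℤ) ^ (derivComponent F u v x).val := by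
  rw [sum_neg_one_pow_val_eq_card_filter, GaloisField.fintype_card_two hn, dlct,
    Nat.card_eq_fintype_card, Fintype.card_subtype, mul_sub, ← pow_succ',
    Nat.sub_add_cancel (Nat.pos_of_ne_zero hn)]
  rfl

lemma derivComponent_add_derivComponent (σ : GaloisField 2 n →+* GaloisField 2 n)
    (hσ : ∀ y, trF2 n (σ y) = trF2 n y) {F : GaloisField 2 n → GaloisField 2 n}
    (hF : ∀ y, F y = σ (σ y) * σ y * y) (u v x w : GaloisField 2 n) :
    derivComponent F u v (x + w) + derivComponent F u v x
        + (derivComponent F u v w + derivComponent F u v 0)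
      = trF2 n ((σ ^ 2) x * linearizedEval σ (radicalCoeff σ u v) 4 w) := by
  have hσσ : ∀ y, (σ ^ 2) y = σ (σ y) := fun y => rfl
  calc _ = trF2 n (v * (F (x + w + u) + F (x + w) + (F (x + u) + F x)
          + (F (w + u) + F w + (F u + F 0)))) := by
        simp only [derivComponent, mul_add, trF2_add, zero_add, add_right_comm x w u]
    -- `Tr ∘ σ = Tr` lets every term be written with the factor `σ (σ x)`
    _ = trF2 n (v * (σ (σ x) * (σ w * u + σ u * w))) + trF2 n (σ (v * (σ x * (σ (σ w) * u
          + σ (σ u) * w)))) + trF2 n (σ (σ (v * (x * (σ (σ w) * σ u + σ (σ u) * σ w))))) := by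
        rw [third_difference_mul_mul σ hF, hσ, hσ, hσ, mul_add, mul_add, trF2_add, trF2_add]
    _ = trF2 n ((σ ^ 2) x * (v * (σ w * u + σ u * w) + σ (v * (σ (σ w) * u + σ (σ u) * w))
          + (σ ^ 2) (v * (σ (σ w) * σ u + σ (σ u) * σ w)))) := by
        rw [← trF2_add, ← trF2_add, hσσ, hσσ]
        congr 1
        simp only [map_mul]
        ring
    _ = _ := by rw [radical_eq_linearizedEval]

lemma four_mul_dlct_sq_eq (hn : n ≠ 0) {k : ℕ} (hkn : Nat.gcd k n = 1) {u v : GaloisField 2 n}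
    (hu : u ≠ 0) (hv : v ≠ 0) :
    ∃ E : ℤ, E ≤ 16 ∧
      4 * dlct n (fun x => x ^ (2 ^ (2 * k) + 2 ^ k + 1)) u v ^ 2 = 2 ^ n * E := by
  set σ := iterateFrobenius (GaloisField 2 n) 2 k
  set F : GaloisField 2 n → GaloisField 2 n := fun x => x ^ (2 ^ (2 * k) + 2 ^ k + 1)
  set L := linearizedEval σ (radicalCoeff σ u v) 4
  have hF : ∀ y, F y = σ (σ y) * σ y * y := fun y => by
    simp only [F, σ, iterateFrobenius_def, ← pow_mul, two_mul, pow_add, pow_one]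
  have hσ : ∀ y, trF2 n (σ y) = trF2 n y := trF2_pow_two_pow k
  have hσ2 : Function.Surjective ⇑(σ ^ 2) := Finite.surjective_of_injective (σ ^ 2).injective
  let φ : GaloisField 2 n → GaloisField 2 n →+ ZMod 2 := fun w =>
    ((Algebra.trace (ZMod 2) _).toAddMonoidHom.comp (AddMonoidHom.mulRight (L w))).comp
      (σ ^ 2).toAddMonoidHom
  have hlead : radicalCoeff σ u v 4 ≠ 0 := by
    rw [radicalCoeff]
    exact mul_ne_zero ((map_ne_zero _).mpr hv) ((map_ne_zero _).mpr hu)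
  have hfix : ∀ y, σ y = y → y = 0 ∨ y = 1 := fun y hy =>
    eq_zero_or_eq_one_of_pow_two_pow_eq_self (GaloisField.fintype_card_two hn) hkn
      ((iterateFrobenius_def _ _ _).symm.trans hy)
  have hrad : #{w | φ w = 0} ≤ 16 :=
    calc #{w | φ w = 0} ≤ #{w | L w = 0} := card_le_card <| monotone_filter_right _ fun w _ hw =>
          eq_zero_of_forall_trF2_mul_eq_zero hσ2 fun x => DFunLike.congr_fun hw x
      _ ≤ 2 ^ 4 := card_filter_linearizedEval_eq_zero_le σ hfix 4 _ hlead
  have hsq := sq_sum_neg_one_pow_val (derivComponent F u v) φ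
    (derivComponent_add_derivComponent σ hσ hF u v)
  rw [← two_mul_dlct hn, GaloisField.fintype_card_two hn, Nat.cast_pow, Nat.cast_ofNat] at hsq
  refine ⟨∑ w with φ w = 0, (-1 : ℤ) ^ (derivComponent F u v w + derivComponent F u v 0).val,
    ?_, by linear_combination hsq⟩
  calc _ ≤ ∑ w with φ w = 0, |(-1 : ℤ) ^ (derivComponent F u v w + derivComponent F u v 0).val| :=
        (le_abs_self _).trans (abs_sum_le_sum_abs _ _)
    _ ≤ 16 := by simpa using hrad

end GaloisField

lemma natAbs_le_two_pow_of_four_mul_sq_le {s : ℤ} {j : ℕ} (h : 4 * s ^ 2 ≤ 2 ^ (2 * j + 4)) :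
    s.natAbs ≤ 2 ^ (j + 1) := by
  have : s.natAbs ≤ ((2 : ℤ) ^ (j + 1)).natAbs := by
    rw [Int.natAbs_le_iff_sq_le]
    have h4 : (2 : ℤ) ^ (2 * j + 4) = 4 * (2 ^ (j + 1)) ^ 2 := by ring
    linarith
  simpa [Int.natAbs_pow] using this

lemma natAbs_le_two_pow_of_four_mul_sq_eq_of_even {s E : ℤ} {j : ℕ} (hE : E ≤ 16)
    (h : 4 * s ^ 2 = 2 ^ (j + j) * E) : s.natAbs ≤ 2 ^ (j + 1) :=
  natAbs_le_two_pow_of_four_mul_sq_le <| by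
    rw [h, show (2 : ℤ) ^ (2 * j + 4) = 2 ^ (j + j) * 16 by ring]
    exact mul_le_mul_of_nonneg_left hE (by positivity)

/-- Here `2 E` is a square, which forces `E ≤ 8`. -/
lemma natAbs_le_two_pow_of_four_mul_sq_eq_of_odd {s E : ℤ} {j : ℕ} (hE : E ≤ 16)
    (h : 4 * s ^ 2 = 2 ^ (2 * j + 1) * E) : s.natAbs ≤ 2 ^ (j + 1) := by
  obtain ⟨t, ht⟩ : (2 : ℤ) ^ j ∣ 2 * s := by
    rw [← Int.pow_dvd_pow_iff two_ne_zero]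
    exact ⟨2 * E, by linear_combination h⟩
  have htE : t ^ 2 = 2 * E := by
    apply mul_left_cancel₀ (pow_ne_zero (2 * j) two_ne_zero)
    linear_combination h - (2 * s + 2 ^ j * t) * ht
  have hE8 : E ≤ 8 := by
    have hlo : -5 ≤ t := by nlinarith
    have hhi : t ≤ 5 := by nlinarith
    interval_cases t <;> omega
  refine natAbs_le_two_pow_of_four_mul_sq_le ?_
  rw [h, show (2 : ℤ) ^ (2 * j + 4) = 2 ^ (2 * j + 1) * 8 by ring]
  exact mul_le_mul_of_nonneg_left hE8 (by positivity)

lemma dlu_le_of_forall {n B : ℕ} {F : GaloisField 2 n → GaloisField 2 n}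
    (h : ∀ u v, u ≠ 0 → v ≠ 0 → (dlct n F u v).natAbs ≤ B) : dlu n F ≤ B :=
  Finset.sup_le fun p hp => by
    obtain ⟨hu, hv⟩ := (mem_filter.mp hp).2
    exact h p.1 p.2 hu hv

theorem stmt2_general (n k : ℕ) (hn : 0 < n) (he : Nat.gcd k n = 1) :
    (Odd n →
      dlu n (fun x : GaloisField 2 n => x ^ (2 ^ (2 * k) + 2 ^ k + 1)) ≤ 2 ^ ((n + 1) / 2)) ∧
    (Even n →
      dlu n (fun x : GaloisField 2 n => x ^ (2 ^ (2 * k) + 2 ^ k + 1)) ≤ 2 ^ (n / 2 + 1)) := by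
  constructor
  · rintro ⟨j, rfl⟩
    refine dlu_le_of_forall fun u v hu hv => ?_
    obtain ⟨E, hE, h⟩ := four_mul_dlct_sq_eq hn.ne' he hu hv
    rw [show (2 * j + 1 + 1) / 2 = j + 1 by omega]
    exact natAbs_le_two_pow_of_four_mul_sq_eq_of_odd hE h
  · rintro ⟨j, rfl⟩
    refine dlu_le_of_forall fun u v hu hv => ?_
    obtain ⟨E, hE, h⟩ := four_mul_dlct_sq_eq hn.ne' he hu hv
    rw [show (j + j) / 2 = j by omega]
    exact natAbs_le_two_pow_of_four_mul_sq_eq_of_even hE h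

/-- Corollary: for `F(x) = x^{2^{2k}+2^k+1}` on `F_{2^n}` with `gcd(k,n) = 1`,
`DLU_F ≤ 2^{(n+1)/2}` if `n` is odd and `DLU_F ≤ 2^{n/2+1}` if `n` is even. -/
theorem stmt2 (n k : ℕ) (hn : 0 < n) (hk : 0 < k) (he : Nat.gcd k n = 1) :
    (Odd n →
      dlu n (fun x : GaloisField 2 n => x ^ (2 ^ (2 * k) + 2 ^ k + 1)) ≤ 2 ^ ((n + 1) / 2)) ∧
    (Even n →
      dlu n (fun x : GaloisField 2 n => x ^ (2 ^ (2 * k) + 2 ^ k + 1)) ≤ 2 ^ (n / 2 + 1)) :=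
  stmt2_general n k hn he
end

section
/- Let n and k be positive integers with gcd(k,n) = e, and let v be a nonzero element of F_{2^n}. Consider the F_2-linear map L : F_{2^n} → F_{2^n} defined by L(z) = v^{2^{2k}} z^{2^{4k}} + (v^{2^{2k}} + v^{2^k}) z^{2^{3k}} + (v^{2^k} + v) z^{2^k} + v z (all exponents of 2 taken modulo n). Then the kernel of L has size at most 2^{3e} if n is odd, and at most 2^{4e} if n is even. -/
/-!
In characteristic `2`, `L = T ∘ N ∘ T` with `T z = z ^ 2 ^ k + z` and
`N w = v ^ 2 ^ k * w ^ 2 ^ (2 * k) + v * w`, so `|ker L| ≤ |ker T| ^ 2 * |ker N|`.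
The kernel of `T` consists of elements fixed by the `k`-th and `n`-th Frobenius powers, hence by
the `gcd(k, n)`-th, so it has at most `2 ^ e` elements. Two nonzero elements of `ker N` differ by a
factor fixed by the `2k`-th Frobenius power, so `|ker N| ≤ 2 ^ gcd(2k, n)`; and `gcd(2k, n)` is
`e` for odd `n` and at most `2e` in general.
-/

open Function Polynomial

@[to_additive]
theorem MonoidHom.card_ker_comp_le {G H I : Type*} [Group G] [Group H] [Group I] [Finite H]
    (f : H →* I) (g : G →* H) :
    Nat.card (f.comp g).ker ≤ Nat.card g.ker * Nat.card f.ker := by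
  have hg : g.ker ≤ (f.comp g).ker := fun x hx => by
    rw [MonoidHom.mem_ker] at hx ⊢
    rw [MonoidHom.comp_apply, hx, map_one]
  have hmap : (f.comp g).ker.map g ≤ f.ker := by
    rw [Subgroup.map_le_iff_le_comap, ← MonoidHom.comap_ker]
  rw [← Subgroup.relIndex_bot_left, ← Subgroup.relIndex_mul_relIndex _ _ _ bot_le hg,
    Subgroup.relIndex_bot_left, Subgroup.relIndex_ker]
  exact Nat.mul_le_mul_left _ (Subgroup.card_le_of_le hmap)

theorem pow_pow_gcd_eq_self {M : Type*} [Monoid M] {x : M} {p m n : ℕ}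
    (hm : x ^ p ^ m = x) (hn : x ^ p ^ n = x) : x ^ p ^ m.gcd n = x := by
  have periodic_iff (j : ℕ) : IsPeriodicPt (· ^ p) j x ↔ x ^ p ^ j = x := by
    rw [IsPeriodicPt, IsFixedPt, pow_iterate]
  exact (periodic_iff _).1 (((periodic_iff m).2 hm).gcd ((periodic_iff n).2 hn))

section Field

variable {K : Type*} [Field K]

theorem card_pow_eq_self_le {q : ℕ} (hq : 1 < q) : Nat.card {x : K // x ^ q = x} ≤ q := by
  classical
  have hX : (X ^ q - X : K[X]) ≠ 0 := FiniteField.X_pow_card_sub_X_ne_zero K hq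
  calc Nat.card {x : K // x ^ q = x}
      ≤ Nat.card (X ^ q - X : K[X]).roots.toFinset :=
        Nat.card_le_card_of_injective _ (Subtype.impEmbedding _ _ fun x hx => by
          simp [mem_roots hX, hx]).injective
    _ ≤ (X ^ q - X : K[X]).natDegree := by
        rw [Nat.card_eq_fintype_card, Fintype.card_coe]
        exact (Multiset.toFinset_card_le _).trans (card_roots' _)
    _ = q := FiniteField.X_pow_card_sub_X_natDegree_eq K hq

theorem card_pow_eq_mul_le [Finite K] (c : K) {q : ℕ} (hq : q ≠ 0) :
    Nat.card {w : K // w ^ q = c * w} ≤ Nat.card {u : K // u ^ q = u} := by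
  by_cases hsol : ∃ w₀ : K, w₀ ^ q = c * w₀ ∧ w₀ ≠ 0
  · obtain ⟨w₀, hw₀, hw₀_ne⟩ := hsol
    have hc : c ≠ 0 := by
      rintro rfl
      exact hw₀_ne ((pow_eq_zero_iff hq).1 (by rw [hw₀, zero_mul]))
    refine Nat.card_le_card_of_injective (fun w => ⟨w.1 / w₀, ?_⟩) fun x y hxy => ?_
    · rw [div_pow, w.2, hw₀, mul_div_mul_left _ _ hc]
    · exact Subtype.ext ((div_left_inj' hw₀_ne).1 (Subtype.ext_iff.1 hxy))
  · push Not at hsol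
    have : Nonempty {u : K // u ^ q = u} := ⟨⟨0, zero_pow hq⟩⟩
    calc Nat.card {w : K // w ^ q = c * w}
        ≤ 1 := Finite.card_le_one_iff_subsingleton.2
          ⟨fun x y => Subtype.ext ((hsol _ x.2).trans (hsol _ y.2).symm)⟩
      _ ≤ Nat.card {u : K // u ^ q = u} := Finite.card_pos

end Field

section LinearizedBinomial

variable (p : ℕ) [Fact p.Prime]

def linearizedBinomial {R : Type*} [CommRing R] [CharP R p] (a b : R) (m : ℕ) : R →+ R :=
  AddMonoidHom.mk' (fun w => a * w ^ p ^ m + b * w) fun x y => by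
    rw [add_pow_char_pow]
    ring

@[simp]
theorem linearizedBinomial_apply {R : Type*} [CommRing R] [CharP R p] (a b : R) (m : ℕ) (w : R) :
    linearizedBinomial p a b m w = a * w ^ p ^ m + b * w :=
  rfl

theorem card_ker_linearizedBinomial_le {F : Type*} [Field F] [Finite F] [CharP F p] {n : ℕ}
    (hn : 0 < n) (hF : ∀ x : F, x ^ p ^ n = x) {a : F} (ha : a ≠ 0) (b : F) (m : ℕ) :
    Nat.card (linearizedBinomial p a b m).ker ≤ p ^ m.gcd n := by
  have hp := (Fact.out : p.Prime)
  calc Nat.card (linearizedBinomial p a b m).ker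
      ≤ Nat.card {w : F // w ^ p ^ m = (-b / a) * w} :=
        Nat.card_le_card_of_injective _ (Subtype.impEmbedding _ _ fun w hw => by
          rw [AddMonoidHom.mem_ker, linearizedBinomial_apply] at hw
          field_simp
          linear_combination hw).injective
    _ ≤ Nat.card {u : F // u ^ p ^ m = u} := card_pow_eq_mul_le _ (pow_ne_zero _ hp.ne_zero)
    _ ≤ Nat.card {u : F // u ^ p ^ m.gcd n = u} :=
        Nat.card_le_card_of_injective _ (Subtype.impEmbedding _ _ fun u hu =>
          pow_pow_gcd_eq_self hu (hF u)).injective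
    _ ≤ p ^ m.gcd n :=
        card_pow_eq_self_le (Nat.one_lt_pow (Nat.gcd_pos_of_pos_right m hn).ne' hp.one_lt)

theorem linearizedBinomial_comp_factorization {R : Type*} [CommRing R] [CharP R 2]
    (v z : R) (k : ℕ) :
    linearizedBinomial 2 1 1 k (linearizedBinomial 2 (v ^ 2 ^ k) v (2 * k)
      (linearizedBinomial 2 1 1 k z)) =
    v ^ (2 ^ (2 * k)) * z ^ (2 ^ (4 * k)) +
      (v ^ (2 ^ (2 * k)) + v ^ (2 ^ k)) * z ^ (2 ^ (3 * k)) +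
      (v ^ (2 ^ k) + v) * z ^ (2 ^ k) + v * z := by
  simp only [linearizedBinomial_apply, one_mul, add_pow_char_pow, mul_pow, ← pow_mul, ← pow_add,
    show k + k = 2 * k by ring, show 2 * k + k = 3 * k by ring, show k + 2 * k = 3 * k by ring]
  linear_combination v ^ 2 ^ k * z ^ 2 ^ (2 * k) * CharTwo.two_eq_zero (R := R)

end LinearizedBinomial

theorem stmt3_general (n k e : ℕ) (hn : 0 < n) (he : Nat.gcd k n = e)
    (v : GaloisField 2 n) (hv : v ≠ 0) :
    (Odd n →
      Nat.card {z : GaloisField 2 n //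
        v ^ (2 ^ (2 * k)) * z ^ (2 ^ (4 * k)) +
          (v ^ (2 ^ (2 * k)) + v ^ (2 ^ k)) * z ^ (2 ^ (3 * k)) +
          (v ^ (2 ^ k) + v) * z ^ (2 ^ k) + v * z = 0} ≤ 2 ^ (3 * e)) ∧
    (Even n →
      Nat.card {z : GaloisField 2 n //
        v ^ (2 ^ (2 * k)) * z ^ (2 ^ (4 * k)) +
          (v ^ (2 ^ (2 * k)) + v ^ (2 ^ k)) * z ^ (2 ^ (3 * k)) +
          (v ^ (2 ^ k) + v) * z ^ (2 ^ k) + v * z = 0} ≤ 2 ^ (4 * e)) := by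
  have hF (x : GaloisField 2 n) : x ^ 2 ^ n = x := by
    have := Fintype.ofFinite (GaloisField 2 n)
    rw [← GaloisField.card 2 n hn.ne', Nat.card_eq_fintype_card, FiniteField.pow_card]
  set T := linearizedBinomial 2 (1 : GaloisField 2 n) 1 k
  set N := linearizedBinomial 2 (v ^ 2 ^ k) v (2 * k)
  have hL : Nat.card {z : GaloisField 2 n //
      v ^ (2 ^ (2 * k)) * z ^ (2 ^ (4 * k)) +
        (v ^ (2 ^ (2 * k)) + v ^ (2 ^ k)) * z ^ (2 ^ (3 * k)) +
        (v ^ (2 ^ k) + v) * z ^ (2 ^ k) + v * z = 0} ≤ 2 ^ (e + (2 * k).gcd n + e) := by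
    calc _ = Nat.card (T.comp (N.comp T)).ker :=
          Nat.card_congr (Equiv.subtypeEquivRight fun z => by
            rw [AddMonoidHom.mem_ker, AddMonoidHom.comp_apply, AddMonoidHom.comp_apply,
              linearizedBinomial_comp_factorization])
      _ ≤ Nat.card T.ker * Nat.card N.ker * Nat.card T.ker :=
          (T.card_ker_comp_le _).trans (Nat.mul_le_mul_right _ (N.card_ker_comp_le T))
      _ ≤ 2 ^ e * 2 ^ (2 * k).gcd n * 2 ^ e := by
          rw [← he]
          gcongr
          all_goals exact card_ker_linearizedBinomial_le 2 hn hF (by simp [hv]) _ _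
      _ = _ := by rw [← pow_add, ← pow_add]
  refine ⟨fun hodd => hL.trans (pow_le_pow_right₀ one_le_two ?_),
    fun _ => hL.trans (pow_le_pow_right₀ one_le_two ?_)⟩
  · rw [Nat.Coprime.gcd_mul_left_cancel k (Nat.coprime_two_left.2 hodd), he]
    omega
  · have : (2 * k).gcd n ≤ 2 * e := by
      rw [← he, ← Nat.gcd_mul_left]
      exact Nat.le_of_dvd (Nat.gcd_pos_of_pos_right _ (by omega))
        (Nat.gcd_dvd_gcd_mul_left_right _ _ _)
    omega

/-- For nonzero `v ∈ F_{2^n}` and `gcd(k,n) = e`, the kernel of the `F_2`-linear map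
`L(z) = v^{2^{2k}} z^{2^{4k}} + (v^{2^{2k}} + v^{2^k}) z^{2^{3k}} + (v^{2^k} + v) z^{2^k} + v z`
has size at most `2^{3e}` if `n` is odd and at most `2^{4e}` if `n` is even. -/
theorem stmt3 (n k e : ℕ) (hn : 0 < n) (hk : 0 < k) (he : Nat.gcd k n = e)
    (v : GaloisField 2 n) (hv : v ≠ 0) :
    (Odd n →
      Nat.card {z : GaloisField 2 n //
        v ^ (2 ^ (2 * k)) * z ^ (2 ^ (4 * k)) +
          (v ^ (2 ^ (2 * k)) + v ^ (2 ^ k)) * z ^ (2 ^ (3 * k)) +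
          (v ^ (2 ^ k) + v) * z ^ (2 ^ k) + v * z = 0} ≤ 2 ^ (3 * e)) ∧
    (Even n →
      Nat.card {z : GaloisField 2 n //
        v ^ (2 ^ (2 * k)) * z ^ (2 ^ (4 * k)) +
          (v ^ (2 ^ (2 * k)) + v ^ (2 ^ k)) * z ^ (2 ^ (3 * k)) +
          (v ^ (2 ^ k) + v) * z ^ (2 ^ k) + v * z = 0} ≤ 2 ^ (4 * e)) :=
  stmt3_general n k e hn he v hv
end

section
/- Let n = 2m with m a positive integer and let λ be a nonzero element of F_{2^n}. Then #{θ ∈ μ_{2^m+1} : Tr(θλ) = 0} = (2^m + 2 − K_m(λ^{2^m+1}))/2 and #{θ ∈ μ_{2^m+1} : Tr(θλ) = 1} = (2^m + K_m(λ^{2^m+1}))/2, where λ^{2^m+1} is regarded as an element of the subfield F_{2^m}. -/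
open scoped BigOperators Classical

/-!
Let `q = 2^m`, `K = 𝔽_q ⊆ L = 𝔽_{q²}`, `N`, `Tr` the norm and trace of `L/K`, and
`ψ = (-1)^{Tr_{K/𝔽₂}}`. The two counts add up to `#μ_{q+1} = q + 1`, and their
difference is `S = ∑_{θ ∈ μ_{q+1}} ψ(Tr(θλ))`. Substituting `y = θλ` turns `S` into the
sum of `ψ(Tr y)` over the norm fibre `N(y) = γ = N(λ)`. Detecting that fibre by
orthogonality of the additive characters `ψ(u ·)` of `K` gives
`q S = ∑_u ∑_y ψ(u (N y - γ) + Tr y)`. For `u ≠ 0` complete the norm: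
`u N(y) + Tr y = u N(y + u⁻¹) - u⁻¹`. Since the norm is `(q+1)`-to-one on `Lˣ`,
`∑_z ψ(u N z) = -q`, and so `q S = q (1 - K_m(γ))`.
-/

open Finset Module

namespace FiniteField

variable {K L : Type*} [Field K] [Field L] [Fintype L] [Algebra K L]

theorem card_norm_fiber_zero : #{y : L | Algebra.norm K y = 0} = 1 :=
  card_eq_one.mpr ⟨0, by ext; simp [Algebra.norm_eq_zero_iff]⟩

theorem card_norm_fiber_eq_card_norm_fiber_one {b : K} (hb : b ≠ 0) :
    #{y : L | Algebra.norm K y = b} = #{y : L | Algebra.norm K y = 1} := by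
  obtain ⟨x, hx⟩ := norm_surjective K L b
  have hx0 : x ≠ 0 := by rintro rfl; simp [eq_comm, hb] at hx
  refine card_nbij' (x⁻¹ * ·) (x * ·) ?_ ?_ ?_ ?_ <;> intro y hy <;>
    simp_all [Algebra.norm_inv]

variable [Fintype K]

local notation "q" => Fintype.card K

theorem card_norm_fiber (hL : finrank K L = 2) {b : K} (hb : b ≠ 0) :
    #{y : L | Algebra.norm K y = b} = q + 1 := by
  rw [card_norm_fiber_eq_card_norm_fiber_one hb]
  -- the fibre over `0` and the `q - 1` equal fibres over `Kˣ` partition the `q²` elements of `L`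
  have hsum := card_eq_sum_card_fiberwise (s := univ) (t := univ)
    (f := fun y : L => Algebra.norm K y) (fun _ _ => mem_univ _)
  rw [← add_sum_erase _ _ (mem_univ 0), card_norm_fiber_zero,
    sum_congr rfl fun b hb => card_norm_fiber_eq_card_norm_fiber_one (ne_of_mem_erase hb),
    sum_const, smul_eq_mul, card_erase_of_mem (mem_univ 0), card_univ, card_univ,
    card_eq_pow_finrank (K := K), hL] at hsum
  have hq : 1 < q := Fintype.one_lt_card
  apply Nat.eq_of_mul_eq_mul_left (show 0 < q - 1 by omega)
  zify [hq.le] at hsum ⊢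
  linear_combination -hsum

theorem algebraMap_norm_eq_mul_pow (hL : finrank K L = 2) (y : L) :
    algebraMap K L (Algebra.norm K y) = y * y ^ q := by
  rw [algebraMap_norm_eq_prod_pow, hL, Nat.card_eq_fintype_card]
  simp [prod_range_succ]

theorem algebraMap_trace_eq_add_pow (hL : finrank K L = 2) (y : L) :
    algebraMap K L (Algebra.trace K L y) = y + y ^ q := by
  rw [algebraMap_trace_eq_sum_pow, hL, Nat.card_eq_fintype_card]
  simp [sum_range_succ]

theorem norm_eq_one_iff (hL : finrank K L = 2) (θ : L) :
    Algebra.norm K θ = 1 ↔ θ ^ (q + 1) = 1 := by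
  rw [← (algebraMap K L).injective.eq_iff, algebraMap_norm_eq_mul_pow hL, map_one, pow_succ']

theorem norm_add_algebraMap (hL : finrank K L = 2) (y : L) (c : K) :
    Algebra.norm K (y + algebraMap K L c) =
      Algebra.norm K y + c * Algebra.trace K L y + c ^ 2 := by
  apply (algebraMap K L).injective
  have hφ : (y + algebraMap K L c) ^ q = y ^ q + algebraMap K L c := by
    have h := map_add (frobeniusAlgEquivOfAlgebraic K L) y (algebraMap K L c)
    rwa [AlgEquiv.commutes, coe_frobeniusAlgEquivOfAlgebraic] at h
  simp only [map_add, map_mul, map_pow, algebraMap_norm_eq_mul_pow hL,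
    algebraMap_trace_eq_add_pow hL, hφ]
  ring

/-- Here `x⁻¹` is Lean's inverse, so `0⁻¹ = 0` as in the usual convention. -/
noncomputable def kloostermanSum {R : Type*} [CommRing R] (ψ : AddChar K R) (γ : K) : R :=
  ∑ x, ψ (γ * x + x⁻¹)

variable {R : Type*} [CommRing R] [IsDomain R] {ψ : AddChar K R}

theorem sum_addChar_trace_eq_zero (hψ : ψ.IsPrimitive) :
    ∑ y : L, ψ (Algebra.trace K L y) = 0 := by
  obtain ⟨a, ha⟩ := DFunLike.ne_iff.mp (by simpa using hψ one_ne_zero : ψ ≠ 1)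
  obtain ⟨y, rfl⟩ := Algebra.trace_surjective K L a
  refine AddChar.sum_eq_zero_of_ne_one
    (ψ := ψ.compAddMonoidHom (Algebra.trace K L).toAddMonoidHom) fun h => ha ?_
  simpa using DFunLike.congr_fun h y

theorem sum_addChar_mul_norm (hψ : ψ.IsPrimitive) (hL : finrank K L = 2) {u : K}
    (hu : u ≠ 0) : ∑ z : L, ψ (u * Algebra.norm K z) = -q := by
  have horth : ∑ b ∈ univ.erase 0, ψ (u * b) = -1 := by
    have h := AddChar.sum_mulShift u hψ
    simp_rw [if_neg hu, mul_comm _ u] at h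
    rw [← add_sum_erase _ _ (mem_univ 0), mul_zero, AddChar.map_zero_eq_one] at h
    linear_combination h
  rw [sum_comp (fun b => ψ (u * b)) (Algebra.norm K),
    image_univ_of_surjective (norm_surjective K L), ← add_sum_erase _ _ (mem_univ 0),
    card_norm_fiber_zero, sum_congr rfl fun b hb => by rw [card_norm_fiber hL (ne_of_mem_erase hb)],
    ← smul_sum, horth]
  simp

theorem sum_addChar_mul_norm_sub_add_trace (hψ : ψ.IsPrimitive) (hL : finrank K L = 2)
    (γ u : K) :
    ∑ y : L, ψ (u * (Algebra.norm K y - γ) + Algebra.trace K L y) =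
      q * (if u = 0 then 1 else 0) - q * ψ (γ * -u + (-u)⁻¹) := by
  by_cases hu : u = 0
  · simp [hu, sum_addChar_trace_eq_zero hψ]
  have hshift : ∀ y : L, u * (Algebra.norm K y - γ) + Algebra.trace K L y =
      u * Algebra.norm K (y + algebraMap K L u⁻¹) + (γ * -u + (-u)⁻¹) := by
    intro y
    rw [norm_add_algebraMap hL]
    field_simp
    ring
  calc ∑ y : L, ψ (u * (Algebra.norm K y - γ) + Algebra.trace K L y)
      = ∑ y : L, ψ (u * Algebra.norm K (y + algebraMap K L u⁻¹)) * ψ (γ * -u + (-u)⁻¹) :=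
        sum_congr rfl fun y _ => by rw [hshift, AddChar.map_add_eq_mul]
    _ = ∑ z : L, ψ (u * Algebra.norm K z) * ψ (γ * -u + (-u)⁻¹) :=
        Fintype.sum_equiv (Equiv.addRight (algebraMap K L u⁻¹)) _ _ fun _ => rfl
    _ = _ := by rw [← sum_mul, sum_addChar_mul_norm hψ hL hu, if_neg hu]; ring

theorem sum_addChar_trace_norm_fiber [CharZero R] (hψ : ψ.IsPrimitive)
    (hL : finrank K L = 2) (γ : K) :
    ∑ y ∈ {y : L | Algebra.norm K y = γ}, ψ (Algebra.trace K L y) =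
      1 - kloostermanSum ψ γ := by
  have hq : (q : R) ≠ 0 := Nat.cast_ne_zero.mpr Fintype.card_ne_zero
  have hkl : ∑ u : K, ψ (γ * -u + (-u)⁻¹) = kloostermanSum ψ γ :=
    Fintype.sum_equiv (Equiv.neg K) _ _ fun _ => rfl
  apply mul_left_cancel₀ hq
  calc (q : R) * ∑ y ∈ {y : L | Algebra.norm K y = γ}, ψ (Algebra.trace K L y)
      = ∑ y : L, (∑ u : K, ψ (u * (Algebra.norm K y - γ))) * ψ (Algebra.trace K L y) := by
        rw [sum_filter, mul_sum]
        refine sum_congr rfl fun y _ => ?_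
        rw [AddChar.sum_mulShift _ hψ, sub_eq_zero]
        split_ifs <;> simp
    _ = ∑ u : K, ∑ y : L, ψ (u * (Algebra.norm K y - γ) + Algebra.trace K L y) := by
        simp_rw [sum_mul, ← AddChar.map_add_eq_mul]
        exact sum_comm
    _ = q * (1 - kloostermanSum ψ γ) := by
        simp_rw [sum_addChar_mul_norm_sub_add_trace hψ hL, sum_sub_distrib, ← mul_sum, hkl]
        simp [mul_sub]

theorem sum_addChar_trace_mul_norm_one [CharZero R] (hψ : ψ.IsPrimitive)
    (hL : finrank K L = 2) {l : L} (hl : l ≠ 0) :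
    ∑ θ ∈ {θ : L | Algebra.norm K θ = 1}, ψ (Algebra.trace K L (θ * l)) =
      1 - kloostermanSum ψ (Algebra.norm K l) := by
  rw [← sum_addChar_trace_norm_fiber hψ hL]
  refine sum_nbij' (· * l) (· * l⁻¹) ?_ ?_ ?_ ?_ fun _ _ => rfl <;> intro θ hθ <;>
    simp_all [Algebra.norm_inv]

end FiniteField

def signChar : AddChar (ZMod 2) ℤ where
  toFun b := (-1) ^ b.val
  map_zero_eq_one' := rfl
  map_add_eq_mul' := by decide

@[simp] theorem signChar_zero : signChar 0 = 1 := rfl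

@[simp] theorem signChar_one : signChar 1 = -1 := rfl

theorem ZMod.two_ne_zero_iff_eq_one (b : ZMod 2) : b ≠ 0 ↔ b = 1 := by
  revert b; decide

theorem card_filter_eq_zero_add_card_filter_eq_one {α : Type*} (s : Finset α)
    (f : α → ZMod 2) : #{x ∈ s | f x = 0} + #{x ∈ s | f x = 1} = #s := by
  simp_rw [← ZMod.two_ne_zero_iff_eq_one]
  exact card_filter_add_card_filter_not _

theorem card_filter_eq_zero_sub_card_filter_eq_one {α : Type*} (s : Finset α)
    (f : α → ZMod 2) :
    (#{x ∈ s | f x = 0} : ℤ) - #{x ∈ s | f x = 1} = ∑ x ∈ s, signChar (f x) := by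
  rw [← sum_filter_add_sum_filter_not s (f · = 0)]
  simp_rw [ZMod.two_ne_zero_iff_eq_one]
  have h0 : ∀ x ∈ {x ∈ s | f x = 0}, signChar (f x) = 1 := fun x hx => by
    rw [(mem_filter.mp hx).2, signChar_zero]
  have h1 : ∀ x ∈ {x ∈ s | f x = 1}, signChar (f x) = -1 := fun x hx => by
    rw [(mem_filter.mp hx).2, signChar_one]
  rw [sum_congr rfl h0, sum_congr rfl h1]
  simp [sub_eq_add_neg]

noncomputable def traceSignChar (F : Type*) [Field F] [Algebra (ZMod 2) F] : AddChar F ℤ :=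
  signChar.compAddMonoidHom (Algebra.trace (ZMod 2) F).toAddMonoidHom

theorem isPrimitive_traceSignChar (F : Type*) [Field F] [Fintype F] [Algebra (ZMod 2) F] :
    (traceSignChar F).IsPrimitive := by
  refine AddChar.IsPrimitive.of_ne_one fun h => ?_
  obtain ⟨x, hx⟩ := Algebra.trace_surjective (ZMod 2) F 1
  have := DFunLike.congr_fun h x
  simp [traceSignChar, hx] at this

namespace FiniteField

variable {K L : Type*} [Field K] [Fintype K] [Field L] [Fintype L] [Algebra (ZMod 2) K]
  [Algebra (ZMod 2) L] [Algebra K L] [IsScalarTower (ZMod 2) K L]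

theorem traceSignChar_trace (x : L) :
    traceSignChar K (Algebra.trace K L x) = signChar (Algebra.trace (ZMod 2) L x) := by
  simp [traceSignChar, Algebra.trace_trace]

theorem card_unitCircle_trace_mul_eq (hL : finrank K L = 2) {l : L} (hl : l ≠ 0) :
    (#{θ : L | θ ^ (Fintype.card K + 1) = 1 ∧ Algebra.trace (ZMod 2) L (θ * l) = 0} : ℤ) =
        (Fintype.card K + 2 - kloostermanSum (traceSignChar K) (Algebra.norm K l)) / 2 ∧
      (#{θ : L | θ ^ (Fintype.card K + 1) = 1 ∧ Algebra.trace (ZMod 2) L (θ * l) = 1} : ℤ) =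
        (Fintype.card K + kloostermanSum (traceSignChar K) (Algebra.norm K l)) / 2 := by
  set μ : Finset L := {θ | Algebra.norm K θ = 1}
  have hμ : #μ = Fintype.card K + 1 := card_norm_fiber hL one_ne_zero
  have hsum := card_filter_eq_zero_add_card_filter_eq_one μ
    fun θ => Algebra.trace (ZMod 2) L (θ * l)
  have hdiff := card_filter_eq_zero_sub_card_filter_eq_one μ
    fun θ => Algebra.trace (ZMod 2) L (θ * l)
  simp_rw [← traceSignChar_trace (K := K)] at hdiff
  rw [sum_addChar_trace_mul_norm_one (isPrimitive_traceSignChar K) hL hl] at hdiff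
  simp_rw [μ, filter_filter, norm_eq_one_iff hL] at hsum hdiff hμ
  omega

end FiniteField

theorem kloo_eq_kloostermanSum (m : ℕ) (γ : GaloisField 2 m) :
    kloo m γ = FiniteField.kloostermanSum (traceSignChar (GaloisField 2 m)) γ :=
  rfl

/-- For `n = 2m` and nonzero `λ ∈ F_{2^n}`:
`#{θ ∈ μ_{2^m+1} : Tr(θλ) = 0} = (2^m + 2 - K_m(λ^{2^m+1}))/2` and
`#{θ ∈ μ_{2^m+1} : Tr(θλ) = 1} = (2^m + K_m(λ^{2^m+1}))/2`, where `λ^{2^m+1}` is identified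
with an element `γ` of `F_{2^m}` via a field embedding `σ : F_{2^m} → F_{2^n}`. -/
theorem stmt6 (m : ℕ) (hm : 0 < m) (lam : GaloisField 2 (2 * m)) (hlam : lam ≠ 0)
    (σ : GaloisField 2 m →+* GaloisField 2 (2 * m))
    (γ : GaloisField 2 m) (hγ : σ γ = lam ^ (2 ^ m + 1)) :
    (Nat.card {θ : GaloisField 2 (2 * m) //
        θ ^ (2 ^ m + 1) = 1 ∧ trF2 (2 * m) (θ * lam) = 0} : ℤ) =
      (2 ^ m + 2 - kloo m γ) / 2 ∧
    (Nat.card {θ : GaloisField 2 (2 * m) //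
        θ ^ (2 ^ m + 1) = 1 ∧ trF2 (2 * m) (θ * lam) = 1} : ℤ) =
      (2 ^ m + kloo m γ) / 2 := by
  let _ := σ.toAlgebra
  have : IsScalarTower (ZMod 2) (GaloisField 2 m) (GaloisField 2 (2 * m)) :=
    .of_algebraMap_eq' (Subsingleton.elim _ _)
  have hK : Fintype.card (GaloisField 2 m) = 2 ^ m := by
    rw [Fintype.card_eq_nat_card, GaloisField.card 2 m hm.ne']
  have hL : finrank (GaloisField 2 m) (GaloisField 2 (2 * m)) = 2 := by
    have h := Module.card_eq_pow_finrank (K := GaloisField 2 m) (V := GaloisField 2 (2 * m))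
    rw [hK, Fintype.card_eq_nat_card, GaloisField.card 2 (2 * m) (by omega), ← pow_mul] at h
    exact (Nat.eq_of_mul_eq_mul_left hm
      ((mul_comm m 2).trans (Nat.pow_right_injective le_rfl h))).symm
  have hnorm : Algebra.norm (GaloisField 2 m) lam = γ := σ.injective <|
    (FiniteField.algebraMap_norm_eq_mul_pow hL lam).trans (by rw [hK, ← pow_succ', ← hγ])
  obtain ⟨h0, h1⟩ := FiniteField.card_unitCircle_trace_mul_eq hL hlam
  rw [hK, hnorm, ← kloo_eq_kloostermanSum] at h0 h1
  simp only [Nat.card_eq_fintype_card, Fintype.card_subtype]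
  exact ⟨by exact_mod_cast h0, by exact_mod_cast h1⟩
end

section
/- Let F : F_{2^n} → F_{2^n} and F_1, ..., F_t : F_{2^n} → F_{2^n} be functions, and let ξ_1, ..., ξ_t be t distinct elements of F_{2^n}. Define f : F_{2^n} → F_{2^n} by f(x) = F(x) if x ∉ {ξ_1, ..., ξ_t}, and f(ξ_i) = F_i(ξ_i) for i = 1, ..., t. Then DLU_f ≤ DLU_F + 2t. -/
open scoped BigOperators Classical

/-!
Changing `f` on a set `S` changes the derivative `x ↦ f (x + u) + f x` only at points `x` with
`x ∈ S` or `x + u ∈ S`, at most `2 |S|` of them. So every DLCT entry, a count of points shifted by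
the constant `2^(n-1)`, moves by at most `2 |S|`, and so does its maximum.
-/

open Finset

theorem card_filter_le_card_filter_add {α : Type*} [Fintype α] [DecidableEq α]
    (p q : α → Prop) [DecidablePred p] [DecidablePred q] (T : Finset α)
    (h : ∀ x ∉ T, p x → q x) : #{x | p x} ≤ #{x | q x} + #T := by
  have hsub : ({x | p x} : Finset α) \ ({x | q x} : Finset α) ⊆ T := by
    intro x hx
    simp only [mem_sdiff, mem_filter, mem_univ, true_and] at hx
    by_contra hxT
    exact hx.2 (h x hxT hx.1)
  calc #{x | p x} ≤ #(({x | p x} : Finset α) \ ({x | q x} : Finset α)) + #{x | q x} :=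
        card_le_card_sdiff_add_card
    _ ≤ #{x | q x} + #T := by rw [add_comm]; exact Nat.add_le_add_left (card_le_card hsub) _

theorem abs_card_filter_sub_card_filter_le {α : Type*} [Fintype α] [DecidableEq α]
    (p q : α → Prop) [DecidablePred p] [DecidablePred q] (T : Finset α)
    (h : ∀ x ∉ T, p x ↔ q x) : |(#{x | p x} : ℤ) - #{x | q x}| ≤ #T := by
  have hpq := card_filter_le_card_filter_add p q T fun x hx => (h x hx).1
  have hqp := card_filter_le_card_filter_add q p T fun x hx => (h x hx).2
  rw [abs_sub_le_iff]
  constructor <;> omega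

theorem card_union_image_le_two_mul {α : Type*} [DecidableEq α] (S : Finset α) (g : α → α) :
    #(S ∪ S.image g) ≤ 2 * #S := by
  calc #(S ∪ S.image g) ≤ #S + #(S.image g) := card_union_le _ _
    _ ≤ #S + #S := Nat.add_le_add_left card_image_le _
    _ = 2 * #S := (two_mul _).symm

theorem dlct_eq_card_filter (n : ℕ) (F : GaloisField 2 n → GaloisField 2 n) (u v : GaloisField 2 n) :
    dlct n F u v = (#{x | trF2 n (v * (F (x + u) + F x)) = 0} : ℤ) - 2 ^ (n - 1) := by
  rw [dlct, Nat.card_eq_fintype_card, Fintype.card_subtype]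

theorem abs_dlct_sub_dlct_le {n : ℕ} {f F : GaloisField 2 n → GaloisField 2 n}
    {S : Finset (GaloisField 2 n)} (hfF : ∀ x ∉ S, f x = F x) (u v : GaloisField 2 n) :
    |dlct n f u v - dlct n F u v| ≤ 2 * #S := by
  have hagree : ∀ x ∉ S ∪ S.image (· - u), f (x + u) + f x = F (x + u) + F x := by
    intro x hx
    simp only [mem_union, mem_image, not_or, not_exists, not_and] at hx
    rw [hfF x hx.1, hfF (x + u) fun hxu => hx.2 _ hxu (add_sub_cancel_right x u)]
  rw [dlct_eq_card_filter, dlct_eq_card_filter, sub_sub_sub_cancel_right]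
  calc _ ≤ (#(S ∪ S.image (· - u)) : ℤ) :=
        abs_card_filter_sub_card_filter_le _ _ _ fun x hx => by rw [hagree x hx]
    _ ≤ 2 * #S := by exact_mod_cast card_union_image_le_two_mul S (· - u)

theorem natAbs_dlct_le_dlu {n : ℕ} (F : GaloisField 2 n → GaloisField 2 n) {u v : GaloisField 2 n}
    (hu : u ≠ 0) (hv : v ≠ 0) : (dlct n F u v).natAbs ≤ dlu n F := by
  unfold dlu
  exact Finset.le_sup (f := fun p : GaloisField 2 n × GaloisField 2 n => (dlct n F p.1 p.2).natAbs)
    (b := (u, v)) (mem_filter.2 ⟨mem_univ _, hu, hv⟩)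

theorem dlu_le_dlu_add {n : ℕ} {f F : GaloisField 2 n → GaloisField 2 n}
    {S : Finset (GaloisField 2 n)} (hfF : ∀ x ∉ S, f x = F x) : dlu n f ≤ dlu n F + 2 * #S := by
  refine Finset.sup_le fun p hp => ?_
  simp only [mem_filter, mem_univ, true_and] at hp
  have hdiff := abs_dlct_sub_dlct_le hfF p.1 p.2
  have hF := natAbs_dlct_le_dlu F hp.1 hp.2
  rw [abs_le] at hdiff
  omega

theorem stmt9_general (n t : ℕ)
    (F : GaloisField 2 n → GaloisField 2 n)
    (ξ : Fin t → GaloisField 2 n)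
    (f : GaloisField 2 n → GaloisField 2 n)
    (hf : ∀ x : GaloisField 2 n, (∀ i : Fin t, x ≠ ξ i) → f x = F x) :
    dlu n f ≤ dlu n F + 2 * t := by
  have hfF : ∀ x ∉ univ.image ξ, f x = F x := fun x hx =>
    hf x fun i hxi => hx (mem_image.2 ⟨i, mem_univ i, hxi.symm⟩)
  have hcard : #(univ.image ξ) ≤ t := card_image_le.trans (card_fin t).le
  exact (dlu_le_dlu_add hfF).trans (by omega)

/-- Theorem: if `f` agrees with `F` outside `t` distinct points `ξ₁, …, ξ_t`, where
`f(ξᵢ) = Fᵢ(ξᵢ)`, then `DLU_f ≤ DLU_F + 2t`. -/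
theorem stmt9 (n t : ℕ) (hn : 0 < n)
    (F : GaloisField 2 n → GaloisField 2 n)
    (Fs : Fin t → GaloisField 2 n → GaloisField 2 n)
    (ξ : Fin t → GaloisField 2 n) (hξ : Function.Injective ξ)
    (f : GaloisField 2 n → GaloisField 2 n)
    (hf : ∀ x : GaloisField 2 n, (∀ i : Fin t, x ≠ ξ i) → f x = F x)
    (hfi : ∀ i : Fin t, f (ξ i) = Fs i (ξ i)) :
    dlu n f ≤ dlu n F + 2 * t :=
  stmt9_general n t F ξ f hf
end

section
/- Let F : F_{2^n} → F_{2^n} and F_1 : F_{2^n} → F_{2^n} be functions and let ξ ∈ F_{2^n}. Define f : F_{2^n} → F_{2^n} by f(x) = F(x) if x ≠ ξ and f(ξ) = F_1(ξ). Then DLU_f ≤ DLU_F + 2. -/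
open scoped BigOperators Classical

/-! Changing `F` at the single point `ξ` changes the derivative `x ↦ F (x + u) + F x` only at
`x = ξ` and `x = ξ - u`, so every DLCT entry moves by at most `2`. -/

open Finset

theorem Nat.card_subtype_le_add_two_of_iff_off_pair {α : Type*} [Finite α] {P Q : α → Prop}
    (a b : α) (h : ∀ x, x ≠ a → x ≠ b → (P x ↔ Q x)) :
    Nat.card {x // P x} ≤ Nat.card {x // Q x} + 2 := by
  have hsub : {x | P x} ⊆ insert a (insert b {x | Q x}) := by
    intro x hx
    by_cases ha : x = a
    · exact Or.inl ha
    by_cases hb : x = b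
    · exact Or.inr (Or.inl hb)
    · exact Or.inr (Or.inr ((h x ha hb).mp hx))
  calc Nat.card {x // P x} = {x | P x}.ncard := rfl
    _ ≤ (insert a (insert b {x | Q x})).ncard := Set.ncard_le_ncard hsub
    _ ≤ (insert b {x | Q x}).ncard + 1 := Set.ncard_insert_le _ _
    _ ≤ {x | Q x}.ncard + 1 + 1 := by gcongr; exact Set.ncard_insert_le _ _
    _ = Nat.card {x // Q x} + 2 := rfl

theorem dlct_le_add_two_of_eq_off_point {n : ℕ} {F G : GaloisField 2 n → GaloisField 2 n}
    {ξ : GaloisField 2 n} (hFG : ∀ x, x ≠ ξ → F x = G x) (u v : GaloisField 2 n) :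
    dlct n F u v ≤ dlct n G u v + 2 := by
  have hcard := Nat.card_subtype_le_add_two_of_iff_off_pair
    (P := fun x => trF2 n (v * (F (x + u) + F x)) = 0)
    (Q := fun x => trF2 n (v * (G (x + u) + G x)) = 0) ξ (ξ - u) fun x hx hxu => by
      rw [hFG x hx, hFG (x + u) (fun h => hxu (eq_sub_of_add_eq h))]
  unfold dlct
  omega

theorem stmt10_general (n : ℕ)
    (F : GaloisField 2 n → GaloisField 2 n) (ξ : GaloisField 2 n)
    (f : GaloisField 2 n → GaloisField 2 n)
    (hf : ∀ x : GaloisField 2 n, x ≠ ξ → f x = F x) :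
    dlu n f ≤ dlu n F + 2 := by
  refine Finset.sup_le fun ⟨u, v⟩ huv => ?_
  obtain ⟨hu, hv⟩ : u ≠ 0 ∧ v ≠ 0 := (mem_filter.mp huv).2
  show (dlct n f u v).natAbs ≤ dlu n F + 2
  have hle := dlct_le_add_two_of_eq_off_point hf u v
  have hge := dlct_le_add_two_of_eq_off_point (fun x hx => (hf x hx).symm) u v
  have hF := natAbs_dlct_le_dlu F hu hv
  omega

/-- Corollary: if `f` agrees with `F` outside a single point `ξ`, where `f(ξ) = F₁(ξ)`,
then `DLU_f ≤ DLU_F + 2`. -/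
theorem stmt10 (n : ℕ) (hn : 0 < n)
    (F F₁ : GaloisField 2 n → GaloisField 2 n) (ξ : GaloisField 2 n)
    (f : GaloisField 2 n → GaloisField 2 n)
    (hf : ∀ x : GaloisField 2 n, x ≠ ξ → f x = F x)
    (hfξ : f ξ = F₁ ξ) :
    dlu n f ≤ dlu n F + 2 :=
  stmt10_general n F ξ f hf
end

section
/- Let n = 2m with m a positive integer and let γ be a nonzero element of F_{2^n}. Then Σ_{x ∈ μ_{2^m+1}} (−1)^{Tr(γx)} = 1 − K_m(γ·γ̄), where γ·γ̄ = γ^{2^m+1} is regarded as an element of the subfield F_{2^m}. -/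
open scoped BigOperators Classical

/-!
Write `c = b²` with `b ∈ F_q`, `q = 2^m`. Then `u = b / γ` lies on the unit circle `μ`, and
substituting `x ↦ u x` turns the sum into `Σ_{x ∈ μ} (-1)^{Tr_q(b (x + x⁻¹))}`, because the relative
trace of `F_{q²}/F_q` is `x + x^q`, which equals `x + x⁻¹` on `μ`. Substituting `y ↦ y / b` turns
`K_m(c)` into `Σ_{y ∈ F_q} (-1)^{Tr_q(b (y + y⁻¹))}`. For each `a ∈ F_q`, the equation
`w + w⁻¹ = a` has exactly two solutions in `F_{q²}`; Frobenius permutes them, so they lie both in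
`F_q` or both in `μ`, and `μ ∩ F_q = {1}`. Hence every `a` is attained twice by the two sums
together, except `a = 0`, attained three times, and the two sums add up to
`2 Σ_a (-1)^{Tr_q(b a)} + 1 = 1`.
-/

open Finset Polynomial Module

theorem add_inv_eq_add_inv_iff {F : Type*} [Field F] {v w : F} (hv : v ≠ 0) (hw : w ≠ 0) :
    v + v⁻¹ = w + w⁻¹ ↔ v = w ∨ v = w⁻¹ := by
  have key : (v - w) * (v - w⁻¹) = v * (v + v⁻¹ - (w + w⁻¹)) := by field_simp; ring
  rw [← sub_eq_zero, ← sub_eq_zero (a := v) (b := w), ← sub_eq_zero (a := v) (b := w⁻¹),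
    ← mul_eq_zero, key, mul_eq_zero, or_iff_right hv]

section FiniteExtension

variable {K L : Type*} [Field K] [Field L] [Fintype L] [Algebra K L]

theorem exists_aeval_eq_zero_of_natDegree_eq_two (hL : finrank K L = 2) {p : K[X]}
    (hp : p.natDegree = 2) : ∃ w : L, aeval w p = 0 := by
  have hp0 : p ≠ 0 := by rintro rfl; simp at hp
  obtain ⟨g, hg, hgp⟩ :=
    WfDvdMonoid.exists_irreducible_factor (not_isUnit_of_natDegree_pos p (by omega)) hp0
  -- `g` has degree 1 or 2, so its root field embeds into `L`.
  have : Fact (Irreducible g) := ⟨hg⟩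
  have hdvd : finrank K (AdjoinRoot g) ∣ finrank K L := by
    rw [(AdjoinRoot.powerBasis hg.ne_zero).finrank, AdjoinRoot.powerBasis_dim, hL]
    have hpos := hg.natDegree_pos
    have hle := hp ▸ natDegree_le_of_dvd hgp hp0
    interval_cases g.natDegree <;> norm_num
  obtain ⟨φ⟩ := FiniteField.nonempty_algHom_of_finrank_dvd hdvd
  refine ⟨φ (AdjoinRoot.root g), ?_⟩
  obtain ⟨r, rfl⟩ := hgp
  rw [map_mul, aeval_algHom_apply, AdjoinRoot.aeval_eq, AdjoinRoot.mk_self, map_zero, zero_mul]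

theorem card_filter_add_inv_eq [CharP L 2] (hL : finrank K L = 2) (a : K) :
    #{w : L | w + w⁻¹ = algebraMap K L a} = 2 := by
  rcases eq_or_ne a 0 with rfl | ha
  -- the solutions are `1` and, because `0⁻¹ = 0`, also `0`
  · have one_add_inv : (1 : L) + 1⁻¹ = 0 := by rw [inv_one, CharTwo.add_self_eq_zero]
    rw [map_zero, ← card_pair (zero_ne_one' L)]
    congr 1
    ext w
    simp only [mem_filter, mem_univ, true_and, mem_insert, mem_singleton]
    rcases eq_or_ne w 0 with rfl | hw
    · simp
    · rw [or_iff_right hw, ← one_add_inv, add_inv_eq_add_inv_iff hw one_ne_zero, inv_one,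
        or_self]
  obtain ⟨w, hw⟩ := exists_aeval_eq_zero_of_natDegree_eq_two hL
    (p := X ^ 2 + C a * X + 1) (by compute_degree!)
  simp only [map_add, map_pow, map_mul, aeval_X, aeval_C, map_one] at hw
  have hw0 : w ≠ 0 := by rintro rfl; simp at hw
  have hwa : w + w⁻¹ = algebraMap K L a := by
    have h : w ^ 2 + 1 = algebraMap K L a * w := CharTwo.add_eq_zero.mp (by rw [← hw]; ring)
    field_simp
    linear_combination h
  have ha' : algebraMap K L a ≠ 0 := by simpa using ha
  have hne : w ≠ w⁻¹ := fun h => ha' (by rw [← hwa, ← h, CharTwo.add_self_eq_zero])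
  rw [← card_pair hne]
  congr 1
  ext v
  simp only [mem_filter, mem_univ, true_and, mem_insert, mem_singleton]
  rcases eq_or_ne v 0 with rfl | hv
  · simp [ha'.symm, hw0.symm]
  · rw [← hwa, add_inv_eq_add_inv_iff hv hw0]

variable [Fintype K]

theorem mem_range_algebraMap_iff_pow_card_eq (z : L) :
    z ∈ Set.range (algebraMap K L) ↔ z ^ Fintype.card K = z := by
  rw [IsGalois.mem_range_algebraMap_iff_fixed]
  refine ⟨fun h => h (FiniteField.frobeniusAlgEquivOfAlgebraic K L), fun h f => ?_⟩
  obtain ⟨n, rfl⟩ := (FiniteField.bijective_frobeniusAlgEquivOfAlgebraic_pow K L).2 f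
  rw [AlgEquiv.coe_pow]
  exact Function.iterate_fixed h _

theorem algebraMap_trace_eq_add_pow_card (hL : finrank K L = 2) (x : L) :
    algebraMap K L (Algebra.trace K L x) = x + x ^ Fintype.card K := by
  rw [FiniteField.algebraMap_trace_eq_sum_pow, hL, sum_range_succ, sum_range_one,
    Nat.card_eq_fintype_card, pow_zero, pow_one, pow_one]

end FiniteExtension

theorem trace_algebraMap_mul_eq_trace_mul_trace {R K L : Type*} [CommRing R] [Field K] [Field L]
    [Algebra R K] [Algebra R L] [Algebra K L] [IsScalarTower R K L] [Module.Free R K]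
    [Module.Finite R K] [FiniteDimensional K L] (b : K) (x : L) :
    Algebra.trace R L (algebraMap K L b * x) = Algebra.trace R K (b * Algebra.trace K L x) := by
  rw [← Algebra.smul_def, ← Algebra.trace_trace (S := K), LinearMap.map_smul, smul_eq_mul]

theorem sum_neg_one_pow_trace_mul_eq_zero {F : Type*} [Field F] [Fintype F] [Algebra (ZMod 2) F]
    {b : F} (hb : b ≠ 0) : ∑ a : F, (-1 : ℤ) ^ (Algebra.trace (ZMod 2) F (b * a)).val = 0 := by
  obtain ⟨y, hy⟩ : ∃ y, Algebra.trace (ZMod 2) F (b * y) ≠ 0 := by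
    by_contra! h
    exact hb ((traceForm_nondegenerate (ZMod 2) F).1 b fun y => h y)
  have hshift : ∀ s : ZMod 2, s ≠ 0 → ∀ t : ZMod 2, (-1 : ℤ) ^ (t + s).val = -(-1) ^ t.val := by
    decide
  have hS := Equiv.sum_comp (Equiv.addRight y)
    fun a => (-1 : ℤ) ^ (Algebra.trace (ZMod 2) F (b * a)).val
  simp only [Equiv.coe_addRight, mul_add, map_add, hshift _ hy, sum_neg_distrib] at hS
  omega

section UnitCircle

variable {K L : Type*} [Field K] [Fintype K] [Field L] [Fintype L] [Algebra K L]

theorem pow_card_add_one_eq_one_or_mem_range {w : L} {a : K}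
    (h : w + w⁻¹ = algebraMap K L a) :
    w ^ (Fintype.card K + 1) = 1 ∨ w ∈ Set.range (algebraMap K L) := by
  rcases eq_or_ne w 0 with rfl | hw
  · exact Or.inr ⟨0, map_zero _⟩
  -- Frobenius sends `w` to another solution of `v + v⁻¹ = a`, that is, to `w` or `w⁻¹`.
  set φ := FiniteField.frobeniusAlgEquivOfAlgebraic K L
  have hφ : φ w + (φ w)⁻¹ = w + w⁻¹ := by rw [← map_inv₀, ← map_add, h, AlgEquiv.commutes]
  rcases (add_inv_eq_add_inv_iff (by simpa using hw) hw).mp hφ with hfix | hinv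
  · exact Or.inr ((mem_range_algebraMap_iff_pow_card_eq w).mpr hfix)
  · left
    rw [pow_succ]
    change φ w * w = 1
    rw [hinv, inv_mul_cancel₀ hw]

theorem algebraMap_trace_eq_add_inv (hL : finrank K L = 2) {x : L}
    (hx : x ^ (Fintype.card K + 1) = 1) :
    algebraMap K L (Algebra.trace K L x) = x + x⁻¹ := by
  have hxq : x ^ Fintype.card K = x⁻¹ := eq_inv_of_mul_eq_one_left (by rwa [← pow_succ])
  rw [algebraMap_trace_eq_add_pow_card hL, hxq]

variable [CharP L 2]

theorem eq_one_of_pow_card_add_one_eq_one_of_mem_range {x : L}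
    (h1 : x ^ (Fintype.card K + 1) = 1) (h2 : x ∈ Set.range (algebraMap K L)) : x = 1 := by
  rw [pow_succ, (mem_range_algebraMap_iff_pow_card_eq x).mp h2, ← sq, ← one_pow 2] at h1
  exact CharTwo.sq_inj.mp h1

theorem card_filter_trace_eq_add_card_filter_add_inv_eq (hL : finrank K L = 2) (a : K) :
    #{x : {z : L // z ^ (Fintype.card K + 1) = 1} | Algebra.trace K L x = a} +
      #{y : K | y + y⁻¹ = a} = 2 + if a = 0 then 1 else 0 := by
  set P : Finset L := {w | w + w⁻¹ = algebraMap K L a}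
  have hμ : #{x : {z : L // z ^ (Fintype.card K + 1) = 1} | Algebra.trace K L x = a} =
      #{w ∈ P | w ^ (Fintype.card K + 1) = 1} := by
    refine card_bij (fun x _ => x.1) (fun x hx => ?_) (fun _ _ _ _ h => Subtype.ext h)
      (fun w hw => ?_)
    · simp only [P, mem_filter, mem_univ, true_and] at hx ⊢
      rw [← algebraMap_trace_eq_add_inv hL x.2, hx]
      exact ⟨rfl, x.2⟩
    · simp only [P, mem_filter, mem_univ, true_and] at hw ⊢
      refine ⟨⟨w, hw.2⟩, (algebraMap K L).injective ?_, rfl⟩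
      rw [algebraMap_trace_eq_add_inv hL hw.2, hw.1]
  have hK : #{y : K | y + y⁻¹ = a} = #{w ∈ P | w ∈ Set.range (algebraMap K L)} := by
    refine card_bij (fun y _ => algebraMap K L y) (fun y hy => ?_)
      (fun _ _ _ _ h => (algebraMap K L).injective h) (fun w hw => ?_)
    · simp only [P, mem_filter, mem_univ, true_and] at hy ⊢
      exact ⟨by rw [← map_inv₀, ← map_add, hy], y, rfl⟩
    · simp only [P, mem_filter, mem_univ, true_and] at hw ⊢
      obtain ⟨hwa, y, rfl⟩ := hw
      exact ⟨y, (algebraMap K L).injective (by rw [map_add, map_inv₀, hwa]), rfl⟩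
  have hcover : {w ∈ P | w ^ (Fintype.card K + 1) = 1 ∨ w ∈ Set.range (algebraMap K L)} = P :=
    filter_true_of_mem fun w hw =>
      pow_card_add_one_eq_one_or_mem_range (mem_filter.mp hw).2
  have hinter : {w ∈ P | w ^ (Fintype.card K + 1) = 1 ∧ w ∈ Set.range (algebraMap K L)} =
      {w ∈ P | w = 1} :=
    filter_congr fun w _ => ⟨fun h => eq_one_of_pow_card_add_one_eq_one_of_mem_range h.1 h.2,
      fun h => by subst h; exact ⟨one_pow _, 1, map_one _⟩⟩
  rw [hμ, hK, ← card_union_add_card_inter, ← filter_or, ← filter_and, hcover, hinter,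
    card_filter_add_inv_eq hL]
  have h1 : (1 : L) ∈ P ↔ a = 0 := by
    simp [P, CharTwo.add_self_eq_zero, eq_comm (a := (0 : L))]
  simp only [card_filter, sum_ite_eq', h1]

theorem sum_unitCircle_add_sum_add_inv {M : Type*} [AddCommMonoid M] (hL : finrank K L = 2)
    (f : K → M) :
    ∑ x : {z : L // z ^ (Fintype.card K + 1) = 1}, f (Algebra.trace K L x) +
      ∑ y : K, f (y + y⁻¹) = 2 • ∑ a, f a + f 0 := by
  rw [← sum_fiberwise' univ
      (fun x : {z : L // z ^ (Fintype.card K + 1) = 1} => Algebra.trace K L x) f,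
    ← sum_fiberwise' univ (fun y : K => y + y⁻¹) f, ← sum_add_distrib]
  simp only [sum_const, ← add_smul, card_filter_trace_eq_add_card_filter_add_inv_eq hL]
  simp only [add_smul, sum_add_distrib, ← smul_sum, ite_smul, one_smul, zero_smul, sum_ite_eq',
    mem_univ, if_true]

end UnitCircle

theorem sum_subtype_pow_eq_one_comp_mul {G₀ M : Type*} [CommGroupWithZero G₀] [Fintype G₀]
    [AddCommMonoid M] {n : ℕ} (hn : n ≠ 0) {u : G₀} (hu : u ^ n = 1) (f : G₀ → M) :
    ∑ x : {z : G₀ // z ^ n = 1}, f (u * x) = ∑ x : {z : G₀ // z ^ n = 1}, f x := by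
  have hu0 : u ≠ 0 := ne_zero_pow hn (hu ▸ one_ne_zero)
  exact Fintype.sum_equiv ((Equiv.mulLeft₀ u hu0).subtypeEquiv fun x => by
    rw [← one_mul (x ^ n), ← hu, ← mul_pow]; rfl) _ _ fun _ => rfl

theorem finrank_galoisField_mul {p : ℕ} [Fact p.Prime] {m k : ℕ} (hm : m ≠ 0) (hk : k ≠ 0)
    [Algebra (GaloisField p m) (GaloisField p (k * m))]
    [IsScalarTower (ZMod p) (GaloisField p m) (GaloisField p (k * m))] :
    finrank (GaloisField p m) (GaloisField p (k * m)) = k := by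
  have h := finrank_mul_finrank (ZMod p) (GaloisField p m) (GaloisField p (k * m))
  rw [GaloisField.finrank p hm, GaloisField.finrank p (mul_ne_zero hk hm)] at h
  exact Nat.eq_of_mul_eq_mul_left (Nat.pos_of_ne_zero hm) (h.trans (mul_comm k m))

theorem kloo_mul_self (m : ℕ) {b : GaloisField 2 m} (hb : b ≠ 0) :
    kloo m (b * b) = ∑ y, (-1 : ℤ) ^ (trF2 m (b * (y + y⁻¹))).val := by
  refine Fintype.sum_bijective (b * ·) (mulLeft_bijective₀ b hb) _ _ fun y => ?_
  rw [mul_add, mul_inv, mul_inv_cancel_left₀ hb, mul_assoc]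

/-- Lemma: for `n = 2m` and nonzero `γ ∈ F_{2^n}`,
`Σ_{x ∈ μ_{2^m+1}} (-1)^{Tr(γx)} = 1 - K_m(γ·γ̄)`, where `γ·γ̄ = γ^{2^m+1}` is identified with
an element `c` of `F_{2^m}` via a field embedding `σ : F_{2^m} → F_{2^n}`. -/
theorem stmt14 (m : ℕ) (hm : 0 < m) (γ : GaloisField 2 (2 * m)) (hγ : γ ≠ 0)
    (σ : GaloisField 2 m →+* GaloisField 2 (2 * m))
    (c : GaloisField 2 m) (hc : σ c = γ ^ (2 ^ m + 1)) :
    ∑ x : {z : GaloisField 2 (2 * m) // z ^ (2 ^ m + 1) = 1},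
        (-1 : ℤ) ^ (trF2 (2 * m) (γ * x.1)).val =
      1 - kloo m c := by
  let := σ.toAlgebra
  have : IsScalarTower (ZMod 2) (GaloisField 2 m) (GaloisField 2 (2 * m)) :=
    .of_algebraMap_eq' (RingHom.ext_zmod _ _)
  have hq : Fintype.card (GaloisField 2 m) = 2 ^ m := by
    rw [Fintype.card_eq_nat_card, GaloisField.card 2 m hm.ne']
  have hL := finrank_galoisField_mul (p := 2) hm.ne' two_ne_zero
  obtain ⟨b, rfl⟩ := FiniteField.isSquare_of_char_two (ringChar.eq _ 2) c
  have hb : b ≠ 0 := by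
    rintro rfl
    rw [mul_zero, map_zero] at hc
    exact pow_ne_zero _ hγ hc.symm
  have hu : (γ⁻¹ * σ b) ^ (2 ^ m + 1) = 1 := by
    have hσb : σ b ^ 2 ^ m = σ b := by rw [← map_pow, ← hq, FiniteField.pow_card]
    rw [mul_pow, inv_pow, ← hc, pow_succ, hσb, map_mul, inv_mul_cancel₀ (by simpa using hb)]
  have hcount := sum_unitCircle_add_sum_add_inv (L := GaloisField 2 (2 * m)) hL
    fun a => (-1 : ℤ) ^ (trF2 m (b * a)).val
  have hchar : ∑ a, (-1 : ℤ) ^ (trF2 m (b * a)).val = 0 := sum_neg_one_pow_trace_mul_eq_zero hb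
  rw [hq, hchar, mul_zero, trF2, map_zero, ZMod.val_zero, pow_zero, smul_zero, zero_add]
    at hcount
  rw [kloo_mul_self m hb, ← sum_subtype_pow_eq_one_comp_mul (by positivity) hu
    fun z => (-1 : ℤ) ^ (trF2 (2 * m) (γ * z)).val]
  refine (Fintype.sum_congr _ _ fun x => ?_).trans (eq_sub_of_add_eq hcount)
  rw [← mul_assoc, mul_inv_cancel_left₀ hγ]
  exact congrArg (fun t : ZMod 2 => (-1 : ℤ) ^ t.val)
    (trace_algebraMap_mul_eq_trace_mul_trace b x.1)
end

section
/- Let n ≥ 3 be a positive integer and γ ∈ F_{2^n}. Then K_n(γ) ≡ 0 (mod 8) if Tr(γ) = 0, and K_n(γ) ≡ 4 (mod 8) if Tr(γ) = 1. -/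
open scoped BigOperators Classical

/-!
Write `γ = a²`. For `a ≠ 0` the substitution `x = y / a` gives `K(γ) = Σ_y ψ(a (y + y⁻¹))`, where
`ψ = (-1)^Tr`, and `y + y⁻¹ = t` has two solutions when `Tr t⁻¹ = 0` and none otherwise (additive
Hilbert 90). Hence `K(γ) = 2 Σ_{Tr u = 0} ψ(a u⁻¹) = 4 #B - 2ⁿ` with
`B = {u | Tr u = 0 ∧ Tr (a u⁻¹) = 0}`. The involution `u ↦ a u⁻¹` of `B` fixes `0`, and fixes
`√a` exactly when `Tr √a = Tr γ = 0`; so `#B` is even iff `Tr γ = 0`, and `8 ∣ 2ⁿ` finishes.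
-/

open Finset Function

local notation "Tr" => Algebra.trace (ZMod 2) _

instance charP_two_of_algebra {F : Type*} [Field F] [Algebra (ZMod 2) F] : CharP F 2 :=
  charP_of_injective_algebraMap' (ZMod 2) 2

theorem Finset.card_modEq_card_filter_isFixedPt {α : Type*} {s : Finset α} {f : α → α}
    (hs : ∀ x ∈ s, f x ∈ s) (hf : ∀ x ∈ s, f (f x) = x) :
    #s ≡ #{x ∈ s | IsFixedPt f x} [MOD 2] := by
  have hmoved : ∑ x ∈ s with ¬IsFixedPt f x, (1 : ZMod 2) = 0 := by
    refine sum_involution (fun x _ => f x) (fun _ _ => by decide) (fun x hx _ => ?_)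
      (fun x hx => ?_) (fun x hx => hf x (mem_filter.1 hx).1)
    · exact (mem_filter.1 hx).2
    · obtain ⟨hxs, hx⟩ := mem_filter.1 hx
      exact mem_filter.2 ⟨hs x hxs, fun h => hx ((hf x hxs).symm.trans h).symm⟩
  rw [sum_const, nsmul_one, ZMod.natCast_eq_zero_iff] at hmoved
  have h := (Nat.modEq_zero_iff_dvd.2 hmoved).add_left #{x ∈ s | IsFixedPt f x}
  rwa [add_zero, card_filter_add_card_filter_not] at h

section CharTwo

variable {F : Type*} [Field F] [CharP F 2]

theorem sq_add_self_eq_sq_add_self_iff {w z : F} :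
    w ^ 2 + w = z ^ 2 + z ↔ w = z ∨ w = z + 1 := by
  have h2 : (2 : F) = 0 := CharTwo.two_eq_zero
  constructor
  · intro h
    have key : (w + z) * (w + z + 1) = 0 := by linear_combination h + (z ^ 2 + z + w * z) * h2
    rcases mul_eq_zero.1 key with h' | h'
    · left; linear_combination h' - z * h2
    · right; linear_combination h' - (z + 1) * h2
  · rintro (rfl | rfl)
    · rfl
    · linear_combination (z + 1) * h2

theorem add_inv_eq_zero_iff {y : F} : y + y⁻¹ = 0 ↔ y = 0 ∨ y = 1 := by
  have h2 : (2 : F) = 0 := CharTwo.two_eq_zero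
  constructor
  · intro h
    refine (eq_or_ne y 0).imp id fun hy => ?_
    have hsq : (y + 1) ^ 2 = 0 := by
      linear_combination y * h - mul_inv_cancel₀ hy + y * h2
    linear_combination (pow_eq_zero_iff two_ne_zero).1 hsq - h2
  · rintro (rfl | rfl)
    · simp
    · rw [inv_one, CharTwo.add_self_eq_zero]

theorem mul_add_inv_mul_eq_self_iff {t : F} (ht : t ≠ 0) (z : F) :
    t * z + (t * z)⁻¹ = t ↔ z ^ 2 + z = t⁻¹ ^ 2 := by
  have h2 : (2 : F) = 0 := CharTwo.two_eq_zero
  rcases eq_or_ne z 0 with rfl | hz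
  · simp [eq_comm (a := (0 : F)), ht]
  have key : t * z + (t * z)⁻¹ - t =
      t * z⁻¹ * (z ^ 2 + z - t⁻¹ ^ 2) - 2 * (t - (t * z)⁻¹) := by
    field_simp
    ring
  rw [← sub_eq_zero, key, h2, zero_mul, sub_zero, mul_eq_zero_iff_left (by simp [ht, hz]),
    sub_eq_zero]

end CharTwo

noncomputable def traceChar {R : Type*} [CommRing R] [Algebra (ZMod 2) R] (x : R) : ℤ :=
  (-1) ^ (Tr x).val

theorem sum_traceChar_comp {R ι : Type*} [CommRing R] [Algebra (ZMod 2) R] (s : Finset ι)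
    (g : ι → R) :
    ∑ i ∈ s, traceChar (g i) = 2 * #{i ∈ s | Tr (g i) = 0} - #s := by
  have hval : ∀ i, traceChar (g i) = if Tr (g i) = 0 then 1 else -1 :=
    fun i => by
      rw [traceChar]
      generalize Tr (g i) = c
      revert c; decide
  simp only [hval, sum_ite, sum_const, nsmul_eq_mul, mul_one, mul_neg]
  rw [← card_filter_add_card_filter_not (s := s) (fun i => Tr (g i) = 0)]
  push_cast
  ring

section TraceTwo

variable {F : Type*} [Field F] [Fintype F] [Algebra (ZMod 2) F]

theorem trace_sq (x : F) : Tr (x ^ 2) = Tr x := by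
  have h := Algebra.trace_eq_of_algEquiv (FiniteField.frobeniusAlgEquivOfAlgebraic (ZMod 2) F) x
  rwa [FiniteField.coe_frobeniusAlgEquivOfAlgebraic, ZMod.card] at h

theorem trace_sq_add_self (z : F) : Tr (z ^ 2 + z) = 0 := by
  rw [map_add, trace_sq, CharTwo.add_self_eq_zero]

theorem exists_trace_eq_one : ∃ b : F, Tr b = 1 :=
  Algebra.trace_surjective (ZMod 2) F 1

theorem sum_traceChar : ∑ x : F, traceChar x = 0 := by
  obtain ⟨b, hb⟩ := exists_trace_eq_one (F := F)
  have hshift : ∀ x : F, traceChar (x + b) = -traceChar x := fun x => by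
    rw [traceChar, traceChar, map_add, hb]
    generalize Tr x = c
    revert c; decide
  have h := Equiv.sum_comp (Equiv.addRight b) (traceChar (R := F))
  simp only [Equiv.coe_addRight, hshift, sum_neg_distrib] at h
  linarith

theorem two_mul_card_filter_trace_eq_zero : 2 * #{x : F | Tr x = 0} = Fintype.card F := by
  have h := sum_traceChar_comp (univ : Finset F) id
  simp only [id] at h
  rw [sum_traceChar, card_univ] at h
  omega

theorem exists_sq_add_self_eq_of_trace_eq_zero {c : F} (hc : Tr c = 0) :
    ∃ z, z ^ 2 + z = c := by
  -- `z ↦ z ^ 2 + z` is at most two-to-one into the trace-zero half of `F`, hence onto it.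
  set K : Finset F := {x | Tr x = 0}
  have hK : 2 * #K = Fintype.card F := two_mul_card_filter_trace_eq_zero
  have hsub : univ.image (fun z : F => z ^ 2 + z) ⊆ K := by
    intro x hx
    obtain ⟨z, -, rfl⟩ := mem_image.1 hx
    exact mem_filter.2 ⟨mem_univ _, trace_sq_add_self z⟩
  have hfiber : ∀ b ∈ univ.image (fun z : F => z ^ 2 + z), #{z ∈ univ | z ^ 2 + z = b} ≤ 2 := by
    intro b hb
    obtain ⟨z, -, rfl⟩ := mem_image.1 hb
    calc _ ≤ #{z, z + 1} :=
          card_le_card fun w hw => by simpa [sq_add_self_eq_sq_add_self_iff] using hw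
      _ ≤ 2 := card_le_two
  have hcard := card_le_mul_card_image univ 2 hfiber
  rw [card_univ] at hcard
  have himage := eq_of_subset_of_card_le hsub (by omega)
  have hcK : c ∈ K := mem_filter.2 ⟨mem_univ _, hc⟩
  rw [← himage] at hcK
  simpa using hcK

theorem card_sq_add_self_eq (c : F) :
    #{z : F | z ^ 2 + z = c} = if Tr c = 0 then 2 else 0 := by
  split_ifs with hc
  · obtain ⟨z, rfl⟩ := exists_sq_add_self_eq_of_trace_eq_zero hc
    have hsol : ({w | w ^ 2 + w = z ^ 2 + z} : Finset F) = {z, z + 1} := by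
      ext w
      simp [sq_add_self_eq_sq_add_self_iff]
    rw [hsol, card_pair]
    simp
  · rw [card_eq_zero, filter_eq_empty_iff]
    rintro z - rfl
    exact hc (trace_sq_add_self z)

-- Thanks to `0⁻¹ = 0` this also covers `t = 0`, whose solutions are `0` and `1`.
theorem card_add_inv_eq (t : F) :
    #{y : F | y + y⁻¹ = t} = if Tr t⁻¹ = 0 then 2 else 0 := by
  rcases eq_or_ne t 0 with rfl | ht
  · have hsol : ({y | y + y⁻¹ = 0} : Finset F) = {0, 1} := by
      ext y
      simp [add_inv_eq_zero_iff]
    rw [hsol, card_pair zero_ne_one, inv_zero, map_zero, if_pos rfl]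
  · rw [← trace_sq t⁻¹, ← card_sq_add_self_eq]
    exact (card_equiv (Equiv.mulLeft₀ t ht) fun z => by
      simp only [mem_filter, mem_univ, true_and, Equiv.mulLeft₀_apply,
        mul_add_inv_mul_eq_self_iff ht]).symm

theorem sum_comp_add_inv {M : Type*} [AddCommMonoid M] (f : F → M) :
    ∑ y : F, f (y + y⁻¹) = 2 • ∑ u : F with Tr u = 0, f u⁻¹ := by
  rw [← sum_fiberwise' univ (fun y : F => y + y⁻¹) f]
  simp_rw [sum_const, card_add_inv_eq, ite_smul, zero_smul]
  rw [← sum_filter, ← smul_sum]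
  congr 1
  exact sum_nbij' Inv.inv Inv.inv (by simp) (by simp) (by simp) (by simp) (by simp)

end TraceTwo

section Kloosterman

variable {F : Type*} [Field F] [Fintype F] [Algebra (ZMod 2) F]

noncomputable def kloosterman (γ : F) : ℤ :=
  ∑ x : F, traceChar (γ * x + x⁻¹)

theorem kloosterman_zero : kloosterman (0 : F) = 0 := by
  simp only [kloosterman, zero_mul, zero_add]
  exact (Equiv.sum_comp (Equiv.inv F) traceChar).trans sum_traceChar

theorem kloosterman_sq {a : F} (ha : a ≠ 0) :
    kloosterman (a ^ 2) = 4 * #{u : F | Tr u = 0 ∧ Tr (a * u⁻¹) = 0} - Fintype.card F := by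
  have hsubst : kloosterman (a ^ 2) = ∑ y : F, traceChar (a * (y + y⁻¹)) := by
    rw [kloosterman, ← Equiv.sum_comp (Equiv.mulLeft₀ a⁻¹ (inv_ne_zero ha))]
    refine sum_congr rfl fun y _ => congrArg traceChar ?_
    rw [Equiv.mulLeft₀_apply, mul_inv, inv_inv, ← mul_assoc, sq, mul_assoc a a a⁻¹,
      mul_inv_cancel₀ ha, mul_one, mul_add]
  rw [hsubst, sum_comp_add_inv (fun t => traceChar (a * t)), sum_traceChar_comp, filter_filter,
    ← two_mul_card_filter_trace_eq_zero]
  push_cast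
  ring

theorem even_card_filter_trace_eq_zero_iff {a : F} (ha : a ≠ 0) :
    Even #{u : F | Tr u = 0 ∧ Tr (a * u⁻¹) = 0} ↔ Tr a = 0 := by
  obtain ⟨r, rfl⟩ : ∃ r : F, r ^ 2 = a := surjective_frobenius F 2 a
  have hr : r ≠ 0 := by rintro rfl; simp at ha
  set B : Finset F := {u | Tr u = 0 ∧ Tr (r ^ 2 * u⁻¹) = 0}
  set f : F → F := fun u => r ^ 2 * u⁻¹
  have hinvol : ∀ u, f (f u) = u := fun u => by
    simp only [f]
    rw [mul_inv, inv_inv, ← mul_assoc, mul_inv_cancel₀ ha, one_mul]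
  have hmaps : ∀ u ∈ B, f u ∈ B := fun u hu => by
    rw [mem_filter] at hu ⊢
    exact ⟨mem_univ _, hu.2.2, (congrArg _ (hinvol u)).trans hu.2.1⟩
  have hfix : ∀ u, IsFixedPt f u ↔ u = 0 ∨ u = r := fun u => by
    rcases eq_or_ne u 0 with rfl | hu
    · simp [f, IsFixedPt]
    · rw [IsFixedPt, mul_inv_eq_iff_eq_mul₀ hu, ← sq, CharTwo.sq_inj]
      simp [hu, eq_comm]
  have hr' : r ^ 2 * r⁻¹ = r := by rw [sq, mul_assoc, mul_inv_cancel₀ hr, mul_one]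
  have hfixed : {u ∈ B | IsFixedPt f u} = if Tr r = 0 then {0, r} else {0} := by
    ext u
    simp only [B, mem_filter, mem_univ, true_and, hfix]
    split_ifs <;> aesop
  rw [trace_sq, Nat.even_iff,
    show _ % 2 = _ % 2 from card_modEq_card_filter_isFixedPt hmaps fun u _ => hinvol u, hfixed]
  split_ifs with htr
  · simp [card_pair hr.symm, htr]
  · simp [htr]

theorem kloosterman_emod_eight (h8 : 8 ∣ Fintype.card F) (γ : F) :
    kloosterman γ % 8 = if Tr γ = 0 then 0 else 4 := by
  obtain ⟨a, rfl⟩ : ∃ a : F, a ^ 2 = γ := surjective_frobenius F 2 γ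
  rcases eq_or_ne a 0 with rfl | ha
  · simp [kloosterman_zero]
  obtain ⟨k, hk⟩ := h8
  have hparity := even_card_filter_trace_eq_zero_iff ha
  rw [kloosterman_sq ha, hk, trace_sq]
  split_ifs with htr
  · obtain ⟨m, hm⟩ := hparity.2 htr
    omega
  · obtain ⟨m, hm⟩ := Nat.not_even_iff_odd.1 (hparity.not.2 htr)
    omega

end Kloosterman

/-- Lemma: for `n ≥ 3` and `γ ∈ F_{2^n}`, `K_n(γ) ≡ 0 (mod 8)` if `Tr(γ) = 0` and
`K_n(γ) ≡ 4 (mod 8)` if `Tr(γ) = 1`. -/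
theorem stmt17 (n : ℕ) (hn : 3 ≤ n) (γ : GaloisField 2 n) :
    (trF2 n γ = 0 → kloo n γ % 8 = 0) ∧ (trF2 n γ = 1 → kloo n γ % 8 = 4) := by
  have h8 : 8 ∣ Fintype.card (GaloisField 2 n) := by
    rw [Fintype.card_eq_nat_card, GaloisField.card 2 n (by omega)]
    exact pow_dvd_pow 2 hn
  have hK : kloo n γ % 8 = if trF2 n γ = 0 then 0 else 4 := kloosterman_emod_eight h8 γ
  refine ⟨fun h => by rw [hK, if_pos h], fun h => by rw [hK, if_neg (by rw [h]; decide)]⟩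
end
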